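/- arXiv:1610.08681 — 8 statements merged into one kernel-verified Lean document; each statement's English description precedes it below -/
import Mathlib

section
/- Let α ∈ (0,1), T > 0, n ∈ ℕ with n ≥ 1, τ = T/n and t_k = kτ. Let f : [0,T] → ℝ be continuously differentiable. Then for every k ∈ {1,…,n}, the trapezoidal approximation of the Riemann–Liouville fractional integral satisfies | (1/Γ(α)) ∫_0^{t_k} f(s)(t_k−s)^{α−1} ds − (τ^α/Γ(α+1)) Σ_{j=0}^{k−1} b_j^α · (f(t_{k−j}) + f(t_{k−j−1}))/2 | ≤ (τ t_k^α / Γ(α+1)) · sup_{s∈[0,T]} |f′(s)|, where b_j^α = (j+1)^α − j^α. -/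
open Set Finset MeasureTheory intervalIntegral

/-! On a cell `[t i, t (i + 1)]` of length `τ`, a function whose derivative is bounded by `M`
stays within `M τ / 2` of the mean of its two endpoint values. The product trapezoidal rule
replaces `f` by that mean on each cell and integrates the kernel `(t k - s) ^ (α - 1)` exactly:
its integral over the cell is `τ ^ α b (k - 1 - i) / α`. As the kernel is nonnegative, the
error is at most `M τ / 2` times `∫ s in 0..t k, (t k - s) ^ (α - 1) = t k ^ α / α`, and
`α Γ(α) = Γ(α + 1)` turns this into half the claimed bound. -/

theorem abs_integral_mul_sub_const_mul_integral_le {f g : ℝ → ℝ} {a b c ε : ℝ} (hab : a ≤ b)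
    (hfg : IntervalIntegrable (fun s => f s * g s) volume a b)
    (hg : IntervalIntegrable g volume a b) (hg0 : ∀ s ∈ Ioc a b, 0 ≤ g s)
    (hf : ∀ s ∈ Ioc a b, |f s - c| ≤ ε) :
    |(∫ s in a..b, f s * g s) - c * ∫ s in a..b, g s| ≤ ε * ∫ s in a..b, g s := by
  rw [← intervalIntegral.integral_const_mul, ← integral_sub hfg (hg.const_mul c),
    ← intervalIntegral.integral_const_mul, ← Real.norm_eq_abs]
  refine norm_integral_le_of_norm_le hab (ae_of_all _ fun s hs => ?_) (hg.const_mul ε)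
  rw [← sub_mul, Real.norm_eq_abs, abs_mul, abs_of_nonneg (hg0 s hs)]
  exact mul_le_mul_of_nonneg_right (hf s hs) (hg0 s hs)

theorem abs_sub_average_endpoints_le {f : ℝ → ℝ} {a b s M : ℝ}
    (hf : ∀ x ∈ Icc a b, ∀ y ∈ Icc a b, |f y - f x| ≤ M * |y - x|) (hs : s ∈ Icc a b) :
    |f s - (f a + f b) / 2| ≤ M * (b - a) / 2 := by
  have hab : a ≤ b := hs.1.trans hs.2
  have ha := hf a ⟨le_rfl, hab⟩ s hs
  have hb := hf b ⟨hab, le_rfl⟩ s hs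
  rw [abs_of_nonneg (sub_nonneg.2 hs.1)] at ha
  rw [abs_of_nonpos (sub_nonpos.2 hs.2)] at hb
  calc |f s - (f a + f b) / 2| = |(f s - f a) + (f s - f b)| / 2 := by
        rw [← abs_two, ← abs_div]; ring_nf
    _ ≤ (|f s - f a| + |f s - f b|) / 2 := by gcongr; exact abs_add_le _ _
    _ ≤ M * (b - a) / 2 := by linarith

theorem abs_integral_mul_sub_sum_trapezoid_le {f g : ℝ → ℝ} {t : ℕ → ℝ} {M h : ℝ} {k : ℕ}
    (ht : Monotone t) (hh : ∀ i < k, t (i + 1) - t i ≤ h) (hM : 0 ≤ M)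
    (hf : ∀ x ∈ Icc (t 0) (t k), ∀ y ∈ Icc (t 0) (t k), |f y - f x| ≤ M * |y - x|)
    (hfg : IntervalIntegrable (fun s => f s * g s) volume (t 0) (t k))
    (hg : IntervalIntegrable g volume (t 0) (t k)) (hg0 : ∀ s ∈ Icc (t 0) (t k), 0 ≤ g s) :
    |(∫ s in t 0..t k, f s * g s) -
        ∑ i ∈ range k, (f (t i) + f (t (i + 1))) / 2 * ∫ s in t i..t (i + 1), g s|
      ≤ M * h / 2 * ∫ s in t 0..t k, g s := by
  have hcell : ∀ i < k, Icc (t i) (t (i + 1)) ⊆ Icc (t 0) (t k) := fun i hi =>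
    Icc_subset_Icc (ht (Nat.zero_le i)) (ht hi)
  have hcell' : ∀ i < k, uIcc (t i) (t (i + 1)) ⊆ uIcc (t 0) (t k) := fun i hi => by
    rw [uIcc_of_le (ht (Nat.le_succ i)), uIcc_of_le (ht (Nat.zero_le k))]
    exact hcell i hi
  rw [← sum_integral_adjacent_intervals fun i hi => hfg.mono_set (hcell' i hi),
    ← sum_integral_adjacent_intervals fun i hi => hg.mono_set (hcell' i hi), mul_sum,
    ← sum_sub_distrib]
  refine (abs_sum_le_sum_abs _ _).trans (sum_le_sum fun i hi => ?_)
  have hi : i < k := mem_range.1 hi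
  refine abs_integral_mul_sub_const_mul_integral_le (ht (Nat.le_succ i))
    (hfg.mono_set (hcell' i hi)) (hg.mono_set (hcell' i hi))
    (fun s hs => hg0 s (hcell i hi (Ioc_subset_Icc_self hs))) fun s hs => ?_
  calc |f s - (f (t i) + f (t (i + 1))) / 2| ≤ M * (t (i + 1) - t i) / 2 :=
        abs_sub_average_endpoints_le (fun x hx y hy => hf x (hcell i hi hx) y (hcell i hi hy))
          (Ioc_subset_Icc_self hs)
    _ ≤ M * h / 2 := by gcongr; exact hh i hi

theorem abs_sub_le_sSup_abs_deriv_mul {f f' : ℝ → ℝ} {a b x y : ℝ}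
    (hf : ∀ s ∈ Icc a b, HasDerivWithinAt f (f' s) (Icc a b) s) (hf' : ContinuousOn f' (Icc a b))
    (hx : x ∈ Icc a b) (hy : y ∈ Icc a b) :
    |f y - f x| ≤ sSup ((fun s => |f' s|) '' Icc a b) * |y - x| :=
  (convex_Icc a b).norm_image_sub_le_of_norm_hasDerivWithin_le hf
    (fun s hs => le_csSup (isCompact_Icc.image_of_continuousOn hf'.abs).bddAbove ⟨s, hs, rfl⟩)
    hx hy

section RiemannLiouvilleKernel

variable {α : ℝ}

theorem intervalIntegrable_sub_rpow_sub_one (hα : 0 < α) (c a b : ℝ) :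
    IntervalIntegrable (fun s => (c - s) ^ (α - 1)) volume a b := by
  simpa using (intervalIntegrable_rpow' (r := α - 1) (a := c - a) (b := c - b)
    (by linarith)).comp_sub_left c

theorem integral_sub_rpow_sub_one (hα : 0 < α) (c a b : ℝ) :
    ∫ s in a..b, (c - s) ^ (α - 1) = ((c - a) ^ α - (c - b) ^ α) / α := by
  rw [integral_comp_sub_left (fun x => x ^ (α - 1)) c,
    integral_rpow (Or.inl (by linarith))]
  norm_num

variable {τ : ℝ} {t b : ℕ → ℝ}

theorem integral_sub_rpow_sub_one_grid (hα : 0 < α) (hτ : 0 ≤ τ) (ht : ∀ i, t i = i * τ)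
    (hb : ∀ j, b j = ((j : ℝ) + 1) ^ α - (j : ℝ) ^ α) {i k : ℕ} (hik : i < k) :
    ∫ s in t i..t (i + 1), (t k - s) ^ (α - 1) = τ ^ α * b (k - 1 - i) / α := by
  have hcast : ((k - 1 - i : ℕ) : ℝ) = k - 1 - i := by
    rw [Nat.cast_sub (by omega), Nat.cast_sub (by omega)]; push_cast; ring
  have hk : (0 : ℝ) ≤ k - 1 - i := by rw [← hcast]; positivity
  rw [integral_sub_rpow_sub_one hα, hb, hcast, ht, ht, ht,
    show (k : ℝ) * τ - i * τ = (k - 1 - i + 1) * τ by ring,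
    show (k : ℝ) * τ - (i + 1 : ℕ) * τ = (k - 1 - i) * τ by push_cast; ring,
    Real.mul_rpow (by linarith) hτ, Real.mul_rpow hk hτ]
  ring

theorem trapezoid_weights_sum_eq (hα : 0 < α) (hτ : 0 ≤ τ) (ht : ∀ i, t i = i * τ)
    (hb : ∀ j, b j = ((j : ℝ) + 1) ^ α - (j : ℝ) ^ α) (f : ℝ → ℝ) (k : ℕ) :
    τ ^ α * ∑ j ∈ range k, b j * ((f (t (k - j)) + f (t (k - j - 1))) / 2) =
      α * ∑ i ∈ range k, (f (t i) + f (t (i + 1))) / 2 *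
        ∫ s in t i..t (i + 1), (t k - s) ^ (α - 1) := by
  rw [← sum_range_reflect, mul_sum, mul_sum]
  refine sum_congr rfl fun i hi => ?_
  have hi : i < k := mem_range.1 hi
  rw [integral_sub_rpow_sub_one_grid hα hτ ht hb hi, show k - (k - 1 - i) = i + 1 by omega,
    show i + 1 - 1 = i by omega]
  field_simp
  ring

theorem abs_integral_mul_sub_rpow_sub_one_sub_sum_trapezoid_le {f : ℝ → ℝ} {M : ℝ} {k : ℕ}
    (hα : 0 < α) (hτ : 0 ≤ τ) (ht : ∀ i, t i = i * τ) (hM : 0 ≤ M)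
    (hf : ∀ x ∈ Icc 0 (t k), ∀ y ∈ Icc 0 (t k), |f y - f x| ≤ M * |y - x|)
    (hfc : ContinuousOn f (Icc 0 (t k))) :
    |(∫ s in 0..t k, f s * (t k - s) ^ (α - 1)) -
        ∑ i ∈ range k, (f (t i) + f (t (i + 1))) / 2 * ∫ s in t i..t (i + 1), (t k - s) ^ (α - 1)|
      ≤ M * τ / 2 * (t k ^ α / α) := by
  have ht0 : t 0 = 0 := by simp [ht]
  have hmono : Monotone t := fun i j hij => by
    simpa only [ht] using mul_le_mul_of_nonneg_right (Nat.cast_le.2 hij) hτ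
  have hfc' : ContinuousOn f (uIcc 0 (t k)) := Set.uIcc_of_le (ht0 ▸ hmono k.zero_le) ▸ hfc
  have herr := abs_integral_mul_sub_sum_trapezoid_le (g := fun s => (t k - s) ^ (α - 1))
    (h := τ) hmono (fun i _ => le_of_eq (by rw [ht, ht]; push_cast; ring)) hM (ht0 ▸ hf)
    (ht0 ▸ (intervalIntegrable_sub_rpow_sub_one hα _ _ _).continuousOn_mul hfc')
    (intervalIntegrable_sub_rpow_sub_one hα _ _ _)
    (fun s hs => Real.rpow_nonneg (sub_nonneg.2 hs.2) _)
  rwa [ht0, integral_sub_rpow_sub_one hα, sub_zero, sub_self, Real.zero_rpow hα.ne',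
    sub_zero] at herr

end RiemannLiouvilleKernel

theorem trapezoidal_riemann_liouville_error_general
    (α T : ℝ) (hα : α ∈ Set.Ioo (0 : ℝ) 1) (hT : 0 < T)
    (n : ℕ)
    (f f' : ℝ → ℝ)
    (hf : ∀ s ∈ Set.Icc (0 : ℝ) T, HasDerivWithinAt f (f' s) (Set.Icc (0 : ℝ) T) s)
    (hf' : ContinuousOn f' (Set.Icc (0 : ℝ) T))
    (τ : ℝ) (hτ : τ = T / n)
    (t : ℕ → ℝ) (ht : ∀ i, t i = (i : ℝ) * τ)
    (b : ℕ → ℝ) (hb : ∀ j, b j = ((j : ℝ) + 1) ^ α - (j : ℝ) ^ α)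
    (k : ℕ) (hkn : k ≤ n) :
    |(1 / Real.Gamma α) * (∫ s in (0 : ℝ)..t k, f s * (t k - s) ^ (α - 1)) -
        (τ ^ α / Real.Gamma (α + 1)) *
          ∑ j ∈ Finset.range k, b j * ((f (t (k - j)) + f (t (k - j - 1))) / 2)|
      ≤ (τ * (t k) ^ α / Real.Gamma (α + 1)) *
          sSup ((fun s => |f' s|) '' Set.Icc (0 : ℝ) T) := by
  obtain ⟨hα, -⟩ := hα
  have hτ0 : 0 ≤ τ := hτ ▸ by positivity
  have htk : t k ≤ T := by
    rw [ht, hτ, ← mul_comm_div]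
    exact mul_le_of_le_one_left hT.le (div_le_one_of_le₀ (Nat.cast_le.2 hkn) n.cast_nonneg)
  have hsub : Icc 0 (t k) ⊆ Icc 0 T := Icc_subset_Icc_right htk
  set M := sSup ((fun s => |f' s|) '' Icc 0 T)
  have hM0 : 0 ≤ M := Real.sSup_nonneg (forall_mem_image.2 fun _ _ => abs_nonneg _)
  have herr := abs_integral_mul_sub_rpow_sub_one_sub_sum_trapezoid_le hα hτ0 ht hM0
    (fun x hx y hy => abs_sub_le_sSup_abs_deriv_mul hf hf' (hsub hx) (hsub hy))
    (fun s hs => (hf s (hsub hs)).continuousWithinAt.mono hsub)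
  have hΓ := Real.Gamma_pos_of_pos hα
  have htk0 : 0 ≤ t k := (ht k).symm ▸ by positivity
  rw [Real.Gamma_add_one hα.ne', div_mul_eq_mul_div (τ ^ α),
    trapezoid_weights_sum_eq hα hτ0 ht hb, mul_div_mul_left _ _ hα.ne', one_div_mul_eq_div,
    ← sub_div, abs_div, abs_of_pos hΓ]
  calc _ ≤ M * τ / 2 * (t k ^ α / α) / Real.Gamma α := by gcongr
    _ = τ * t k ^ α / (α * Real.Gamma α) * M / 2 := by field_simp
    _ ≤ _ := half_le_self (mul_nonneg (by positivity) hM0)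

/-- Trapezoidal approximation error for the Riemann–Liouville fractional integral
of order `α ∈ (0,1)` with base point `0`, on the uniform grid `t k = k * τ`,
`τ = T / n`, for a continuously differentiable `f` on `[0, T]`. -/
theorem trapezoidal_riemann_liouville_error
    (α T : ℝ) (hα : α ∈ Set.Ioo (0 : ℝ) 1) (hT : 0 < T)
    (n : ℕ) (hn : 1 ≤ n)
    (f f' : ℝ → ℝ)
    (hf : ∀ s ∈ Set.Icc (0 : ℝ) T, HasDerivWithinAt f (f' s) (Set.Icc (0 : ℝ) T) s)
    (hf' : ContinuousOn f' (Set.Icc (0 : ℝ) T))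
    (τ : ℝ) (hτ : τ = T / n)
    (t : ℕ → ℝ) (ht : ∀ i, t i = (i : ℝ) * τ)
    (b : ℕ → ℝ) (hb : ∀ j, b j = ((j : ℝ) + 1) ^ α - (j : ℝ) ^ α)
    (k : ℕ) (hk1 : 1 ≤ k) (hkn : k ≤ n) :
    |(1 / Real.Gamma α) * (∫ s in (0 : ℝ)..t k, f s * (t k - s) ^ (α - 1)) -
        (τ ^ α / Real.Gamma (α + 1)) *
          ∑ j ∈ Finset.range k, b j * ((f (t (k - j)) + f (t (k - j - 1))) / 2)|
      ≤ (τ * (t k) ^ α / Real.Gamma (α + 1)) *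
          sSup ((fun s => |f' s|) '' Set.Icc (0 : ℝ) T) :=
  trapezoidal_riemann_liouville_error_general α T hα hT n f f' hf hf' τ hτ t ht b hb k hkn
end

section
/- Let α ∈ (0,1), B(α) = 1 − α + α/Γ(α), T > 0, n ∈ ℕ with n ≥ 1, τ = T/n and t_k = kτ. Let f : [0,T] → ℝ be twice continuously differentiable. Then for every k ∈ {1,…,n}, the Atangana–Baleanu fractional integral of f at t_k satisfies (AB I^α f)(t_k) = (1−α)/B(α) · f(t_k) + (α τ^α/(B(α)Γ(α+1))) Σ_{j=0}^{k−1} b_j^α · (f(t_{k−j}) + f(t_{k−j−1}))/2 + R_{k,α}, where b_j^α = (j+1)^α − j^α and the remainder satisfies |R_{k,α}| ≤ K t_k^α τ with K = (1/(B(α)Γ(α))) · sup_{s∈[0,T]} |f′(s)|. -/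
open Set Finset MeasureTheory intervalIntegral

/-- Trapezoidal numerical scheme for the Atangana–Baleanu fractional integral
`(AB I^α f)(t) = ((1-α)/B(α)) f(t) + (α/(B(α)Γ(α))) ∫_0^t f(s)(t-s)^(α-1) ds`
of a twice continuously differentiable function `f` on `[0, T]`, with remainder
bounded by `K * t_k ^ α * τ` where `K = (1/(B(α)Γ(α))) * sup_{[0,T]} |f'|`. -/
theorem atangana_baleanu_integral_trapezoidal_scheme
    (α T : ℝ) (hα : α ∈ Set.Ioo (0 : ℝ) 1) (hT : 0 < T)
    (B : ℝ) (hB : B = 1 - α + α / Real.Gamma α)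
    (n : ℕ) (hn : 1 ≤ n)
    (f f' f'' : ℝ → ℝ)
    (hf : ∀ s ∈ Set.Icc (0 : ℝ) T, HasDerivWithinAt f (f' s) (Set.Icc (0 : ℝ) T) s)
    (hf' : ∀ s ∈ Set.Icc (0 : ℝ) T, HasDerivWithinAt f' (f'' s) (Set.Icc (0 : ℝ) T) s)
    (hf'' : ContinuousOn f'' (Set.Icc (0 : ℝ) T))
    (τ : ℝ) (hτ : τ = T / n)
    (t : ℕ → ℝ) (ht : ∀ i, t i = (i : ℝ) * τ)
    (b : ℕ → ℝ) (hb : ∀ j, b j = ((j : ℝ) + 1) ^ α - (j : ℝ) ^ α)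
    (K : ℝ) (hK : K = (1 / (B * Real.Gamma α)) * sSup ((fun s => |f' s|) '' Set.Icc (0 : ℝ) T))
    (k : ℕ) (hk1 : 1 ≤ k) (hkn : k ≤ n) :
    ∃ R : ℝ,
      ((1 - α) / B) * f (t k) +
          (α / (B * Real.Gamma α)) * (∫ s in (0 : ℝ)..t k, f s * (t k - s) ^ (α - 1))
        = ((1 - α) / B) * f (t k) +
            (α * τ ^ α / (B * Real.Gamma (α + 1))) *
              (∑ j ∈ Finset.range k, b j * ((f (t (k - j)) + f (t (k - j - 1))) / 2)) + R
        ∧ |R| ≤ K * (t k) ^ α * τ := by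
  obtain ⟨hα0, hα1⟩ := hα
  have hΓ : 0 < Real.Gamma α := Real.Gamma_pos_of_pos hα0
  have hBpos : 0 < B := by
    rw [hB]; have : 0 < α / Real.Gamma α := div_pos hα0 hΓ; linarith
  have hn0 : (0:ℝ) < (n:ℝ) := by exact_mod_cast hn
  have hτ0 : 0 < τ := by rw [hτ]; positivity
  -- grid points in [0, T]
  have htmem : ∀ i : ℕ, i ≤ n → t i ∈ Set.Icc (0 : ℝ) T := by
    intro i hi
    refine ⟨by rw [ht]; positivity, ?_⟩
    rw [ht, hτ]
    calc (i:ℝ) * (T / n) ≤ (n:ℝ) * (T / n) := by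
          apply mul_le_mul_of_nonneg_right (by exact_mod_cast hi) (by positivity)
      _ = T := by field_simp
  have htmono : ∀ i j : ℕ, i ≤ j → t i ≤ t j := by
    intro i j hij
    rw [ht, ht]
    apply mul_le_mul_of_nonneg_right (by exact_mod_cast hij) hτ0.le
  -- sup bound
  set M := sSup ((fun s => |f' s|) '' Set.Icc (0 : ℝ) T) with hM
  have hf'c : ContinuousOn f' (Set.Icc (0:ℝ) T) := fun s hs => (hf' s hs).continuousWithinAt
  have hfc : ContinuousOn f (Set.Icc (0:ℝ) T) := fun s hs => (hf s hs).continuousWithinAt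
  have hbdd : BddAbove ((fun s => |f' s|) '' Set.Icc (0 : ℝ) T) :=
    ((isCompact_Icc).image_of_continuousOn (continuous_abs.comp_continuousOn hf'c)).bddAbove
  have hMle : ∀ s ∈ Set.Icc (0:ℝ) T, |f' s| ≤ M :=
    fun s hs => le_csSup hbdd (Set.mem_image_of_mem _ hs)
  have hM0 : 0 ≤ M := le_trans (abs_nonneg _) (hMle 0 ⟨le_refl _, hT.le⟩)
  -- Lipschitz bound
  have hLip : ∀ x ∈ Set.Icc (0:ℝ) T, ∀ y ∈ Set.Icc (0:ℝ) T, |f y - f x| ≤ M * |y - x| := by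
    intro x hx y hy
    have := Convex.norm_image_sub_le_of_norm_hasDerivWithin_le hf
      (fun s hs => by rw [Real.norm_eq_abs]; exact hMle s hs) (convex_Icc 0 T) hx hy
    simpa [Real.norm_eq_abs] using this
  -- integrability of the kernel
  have hwint : ∀ a c : ℝ, IntervalIntegrable (fun s => (t k - s) ^ (α - 1)) volume a c := by
    intro a c
    have h1 : IntervalIntegrable (fun x : ℝ => x ^ (α - 1)) volume (t k - a) (t k - c) :=
      intervalIntegral.intervalIntegrable_rpow' (by linarith)
    have := h1.comp_sub_left (t k)
    simpa using this
  have hfwint : ∀ a c : ℝ, Set.uIcc a c ⊆ Set.Icc (0:ℝ) T →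
      IntervalIntegrable (fun s => f s * (t k - s) ^ (α - 1)) volume a c := by
    intro a c h
    exact (hwint a c).continuousOn_mul (hfc.mono h)
  have hsubIcc : ∀ i : ℕ, i < k → Set.uIcc (t i) (t (i+1)) ⊆ Set.Icc (0:ℝ) T := by
    intro i hi
    rw [Set.uIcc_of_le (htmono i (i+1) (by omega))]
    exact Set.Icc_subset_Icc (htmem i (by omega)).1 (htmem (i+1) (by omega)).2
  -- step widths
  have hstep : ∀ i : ℕ, t (i+1) - t i = τ := by
    intro i; rw [ht, ht]; push_cast; ring
  -- kernel integral over subinterval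
  have hwval : ∀ i : ℕ, i < k →
      (∫ s in (t i)..(t (i+1)), (t k - s) ^ (α - 1)) = (τ ^ α / α) * b (k - 1 - i) := by
    intro i hi
    rw [intervalIntegral.integral_comp_sub_left (fun x : ℝ => x ^ (α - 1)) (t k)]
    rw [integral_rpow (Or.inl (by linarith))]
    have hm : (k : ℝ) - (i : ℝ) = ((k - 1 - i : ℕ) : ℝ) + 1 := by
      have h1 : (k - 1 - i) + 1 + i = k := by omega
      have h2 := congrArg (Nat.cast (R := ℝ)) h1
      push_cast at h2; linarith
    have hm' : (k : ℝ) - ((i : ℝ) + 1) = ((k - 1 - i : ℕ) : ℝ) := by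
      have h1 : (k - 1 - i) + 1 + i = k := by omega
      have h2 := congrArg (Nat.cast (R := ℝ)) h1
      push_cast at h2; linarith
    have e1 : t k - t i = (((k - 1 - i : ℕ) : ℝ) + 1) * τ := by
      rw [ht, ht, ← hm]; ring
    have e2 : t k - t (i+1) = ((k - 1 - i : ℕ) : ℝ) * τ := by
      rw [ht, ht, ← hm']; push_cast; ring
    rw [e1, e2, hb]
    rw [Real.mul_rpow (by positivity) hτ0.le,
        Real.mul_rpow (by positivity) hτ0.le]
    have : α - 1 + 1 = α := by ring
    rw [this]
    field_simp
  -- splitting of the full integral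
  have hintsub : ∀ i : ℕ, i < k →
      IntervalIntegrable (fun s => f s * (t k - s) ^ (α - 1)) volume (t i) (t (i+1)) :=
    fun i hi => hfwint _ _ (hsubIcc i hi)
  have ht0 : t 0 = 0 := by rw [ht]; simp
  have hsplit : (∫ s in (0:ℝ)..t k, f s * (t k - s) ^ (α - 1))
      = ∑ i ∈ Finset.range k, ∫ s in (t i)..(t (i+1)), f s * (t k - s) ^ (α - 1) := by
    rw [intervalIntegral.sum_integral_adjacent_intervals hintsub, ht0]
  -- trapezoid values
  set c : ℕ → ℝ := fun i => (f (t i) + f (t (i+1))) / 2 with hc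
  -- rewriting the sum
  have hsum : (∑ j ∈ Finset.range k, b j * ((f (t (k - j)) + f (t (k - j - 1))) / 2))
      = ∑ i ∈ Finset.range k, b (k - 1 - i) * c i := by
    rw [← Finset.sum_range_reflect (fun i => b (k - 1 - i) * c i) k]
    apply Finset.sum_congr rfl
    intro j hj
    rw [Finset.mem_range] at hj
    have e1 : k - 1 - (k - 1 - j) = j := by omega
    have e2 : k - 1 - j + 1 = k - j := by omega
    have e3 : k - 1 - j = k - j - 1 := by omega
    rw [e1, hc]
    simp only
    rw [e2, e3]
    ring
  -- error terms
  set E : ℕ → ℝ := fun i => ∫ s in (t i)..(t (i+1)), (f s - c i) * (t k - s) ^ (α - 1) with hE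
  have hdiff : ∀ i : ℕ, i < k →
      (∫ s in (t i)..(t (i+1)), f s * (t k - s) ^ (α - 1)) - c i * ((τ ^ α / α) * b (k-1-i))
        = E i := by
    intro i hi
    rw [hE]
    simp only
    have : (fun s => (f s - c i) * (t k - s) ^ (α - 1))
        = fun s => f s * (t k - s) ^ (α - 1) - c i * (t k - s) ^ (α - 1) := by
      funext s; ring
    rw [this, intervalIntegral.integral_sub (hintsub i hi) ((hwint _ _).const_mul _),
        intervalIntegral.integral_const_mul, hwval i hi]
  -- bound on each error term
  have hEbound : ∀ i : ℕ, i < k → |E i| ≤ M * τ * ((τ ^ α / α) * b (k - 1 - i)) := by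
    intro i hi
    have hle : t i ≤ t (i+1) := htmono i (i+1) (by omega)
    have hgint : IntervalIntegrable (fun s => (f s - c i) * (t k - s) ^ (α - 1)) volume
        (t i) (t (i+1)) :=
      (hwint _ _).continuousOn_mul (((hfc.mono (hsubIcc i hi)).sub continuousOn_const))
    have h1 : |E i| ≤ ∫ s in (t i)..(t (i+1)), |(f s - c i) * (t k - s) ^ (α - 1)| := by
      rw [hE]
      simpa only [Real.norm_eq_abs] using intervalIntegral.norm_integral_le_integral_norm
        (μ := volume) (f := fun s => (f s - c i) * (t k - s) ^ (α - 1)) hle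
    have h2 : (∫ s in (t i)..(t (i+1)), |(f s - c i) * (t k - s) ^ (α - 1)|)
        ≤ ∫ s in (t i)..(t (i+1)), M * τ * (t k - s) ^ (α - 1) := by
      apply intervalIntegral.integral_mono_on hle hgint.abs ((hwint _ _).const_mul _)
      intro s hs
      have hsmem : s ∈ Set.Icc (0:ℝ) T := by
        apply hsubIcc i hi
        rw [Set.uIcc_of_le hle]; exact hs
      have hw0 : 0 ≤ (t k - s) ^ (α - 1) := by
        apply Real.rpow_nonneg
        have : s ≤ t k := le_trans hs.2 (htmono (i+1) k (by omega))
        linarith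
      rw [abs_mul, abs_of_nonneg hw0]
      apply mul_le_mul_of_nonneg_right _ hw0
      -- |f s - c i| ≤ M * τ
      have hb1 : |f s - f (t i)| ≤ M * τ := by
        have := hLip (t i) (htmem i (by omega)) s hsmem
        have habs : |s - t i| ≤ τ := by
          rw [abs_of_nonneg (by linarith [hs.1])]
          have := hstep i
          linarith [hs.2]
        calc |f s - f (t i)| ≤ M * |s - t i| := this
          _ ≤ M * τ := mul_le_mul_of_nonneg_left habs hM0
      have hb2 : |f s - f (t (i+1))| ≤ M * τ := by
        have := hLip (t (i+1)) (htmem (i+1) (by omega)) s hsmem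
        have habs : |s - t (i+1)| ≤ τ := by
          rw [abs_of_nonpos (by linarith [hs.2])]
          have := hstep i
          linarith [hs.1]
        calc |f s - f (t (i+1))| ≤ M * |s - t (i+1)| := this
          _ ≤ M * τ := mul_le_mul_of_nonneg_left habs hM0
      have : f s - c i = ((f s - f (t i)) + (f s - f (t (i+1)))) / 2 := by
        rw [hc]; ring
      rw [this]
      calc |((f s - f (t i)) + (f s - f (t (i+1)))) / 2|
          ≤ (|f s - f (t i)| + |f s - f (t (i+1))|) / 2 := by
            rw [abs_div]; simp only [abs_two]
            apply div_le_div_of_nonneg_right (abs_add_le _ _) (by norm_num)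
        _ ≤ (M * τ + M * τ) / 2 := by linarith
        _ = M * τ := by ring
    have h3 : (∫ s in (t i)..(t (i+1)), M * τ * (t k - s) ^ (α - 1))
        = M * τ * ((τ ^ α / α) * b (k - 1 - i)) := by
      rw [intervalIntegral.integral_const_mul, hwval i hi]
    linarith [h1.trans (h2.trans_eq h3)]
  -- telescoping sum of b
  have hbsum : ∑ i ∈ Finset.range k, b (k - 1 - i) = (k : ℝ) ^ α := by
    rw [Finset.sum_range_reflect (fun i => b i) k]
    have : ∀ j : ℕ, b j = ((j+1 : ℕ) : ℝ) ^ α - ((j : ℕ) : ℝ) ^ α := by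
      intro j; rw [hb]; push_cast; ring
    rw [Finset.sum_congr rfl (fun j _ => this j), Finset.sum_range_sub (fun j => ((j:ℕ):ℝ) ^ α)]
    simp [Real.zero_rpow (ne_of_gt hα0)]
  have hb0 : ∀ i : ℕ, 0 ≤ b i := by
    intro i; rw [hb]
    have : ((i:ℝ)) ^ α ≤ ((i:ℝ) + 1) ^ α :=
      Real.rpow_le_rpow (by positivity) (by linarith) hα0.le
    linarith
  -- total error
  set D : ℝ := (∫ s in (0:ℝ)..t k, f s * (t k - s) ^ (α - 1))
      - (τ ^ α / α) * (∑ j ∈ Finset.range k, b j * ((f (t (k - j)) + f (t (k - j - 1))) / 2))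
    with hD
  have hDsum : D = ∑ i ∈ Finset.range k, E i := by
    rw [hD, hsum, hsplit, Finset.mul_sum, ← Finset.sum_sub_distrib]
    apply Finset.sum_congr rfl
    intro i hi
    rw [Finset.mem_range] at hi
    rw [← hdiff i hi]
    ring
  have hDbound : |D| ≤ M * τ * ((τ ^ α / α) * (k : ℝ) ^ α) := by
    rw [hDsum]
    calc |∑ i ∈ Finset.range k, E i| ≤ ∑ i ∈ Finset.range k, |E i| :=
          Finset.abs_sum_le_sum_abs _ _
      _ ≤ ∑ i ∈ Finset.range k, M * τ * ((τ ^ α / α) * b (k - 1 - i)) :=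
          Finset.sum_le_sum (fun i hi => hEbound i (Finset.mem_range.mp hi))
      _ = ∑ i ∈ Finset.range k, (M * τ * (τ ^ α / α)) * b (k - 1 - i) :=
          Finset.sum_congr rfl (fun i _ => by ring)
      _ = (M * τ * (τ ^ α / α)) * ∑ i ∈ Finset.range k, b (k - 1 - i) :=
          (Finset.mul_sum _ _ _).symm
      _ = M * τ * ((τ ^ α / α) * (k : ℝ) ^ α) := by rw [hbsum]; ring
  refine ⟨(α / (B * Real.Gamma α)) * D, ?_, ?_⟩
  · rw [Real.Gamma_add_one (ne_of_gt hα0), hD]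
    field_simp
    ring
  · have htk : (t k) ^ α = (k : ℝ) ^ α * τ ^ α := by
      rw [ht, Real.mul_rpow (by positivity) hτ0.le]
    have hKval : K = (1 / (B * Real.Gamma α)) * M := by rw [hK]
    rw [abs_mul, abs_of_nonneg (by positivity : (0:ℝ) ≤ α / (B * Real.Gamma α))]
    calc α / (B * Real.Gamma α) * |D|
        ≤ α / (B * Real.Gamma α) * (M * τ * ((τ ^ α / α) * (k : ℝ) ^ α)) := by
          apply mul_le_mul_of_nonneg_left hDbound (by positivity)
      _ = K * (t k) ^ α * τ := by
          rw [hKval, htk]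
          field_simp
end

section
/- Let α ∈ (0,1), B(α) = 1 − α + α/Γ(α), Ψ(α) = α/(B(α)Γ(α)), T > 0, n ∈ ℕ with n ≥ 2, τ = T/n and t_k = kτ. Let f : [0,T] → ℝ be continuously differentiable. Then for every k ∈ {2,…,n}, | Ψ(α) ∫_0^τ (f(y) − f(τ)) (t_k − y)^{α−1} dy | ≤ (α/(B(α)Γ(α+1))) · τ^{1+α} · b_{k−1}^α · sup_{y∈[0,τ]} |f′(y)|, where b_{k−1}^α = k^α − (k−1)^α. -/
open Set MeasureTheory intervalIntegral

/-- Bound on the weighted-kernel integral of the first-step deviation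
`f(y) − f(τ)` appearing in the decomposition of the Atangana–Baleanu integral:
`|Ψ(α) ∫_0^τ (f(y) − f(τ))(t_k − y)^(α−1) dy|
  ≤ (α/(B(α)Γ(α+1))) τ^(1+α) b_{k−1}^α sup_{[0,τ]} |f'|`. -/
theorem atangana_baleanu_first_step_bound
    (α T : ℝ) (hα : α ∈ Set.Ioo (0 : ℝ) 1) (hT : 0 < T)
    (B : ℝ) (hB : B = 1 - α + α / Real.Gamma α)
    (Ψ : ℝ) (hΨ : Ψ = α / (B * Real.Gamma α))
    (n : ℕ) (hn : 2 ≤ n)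
    (f f' : ℝ → ℝ)
    (hf : ∀ s ∈ Set.Icc (0 : ℝ) T, HasDerivWithinAt f (f' s) (Set.Icc (0 : ℝ) T) s)
    (hf' : ContinuousOn f' (Set.Icc (0 : ℝ) T))
    (τ : ℝ) (hτ : τ = T / n)
    (t : ℕ → ℝ) (ht : ∀ i, t i = (i : ℝ) * τ)
    (b : ℕ → ℝ) (hb : ∀ j, b j = ((j : ℝ) + 1) ^ α - (j : ℝ) ^ α)
    (k : ℕ) (hk2 : 2 ≤ k) (hkn : k ≤ n) :
    |Ψ * ∫ y in (0 : ℝ)..τ, (f y - f τ) * (t k - y) ^ (α - 1)|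
      ≤ (α / (B * Real.Gamma (α + 1))) * τ ^ ((1 : ℝ) + α) * b (k - 1) *
          sSup ((fun y => |f' y|) '' Set.Icc (0 : ℝ) τ) := by
  obtain ⟨hα0, hα1⟩ := hα
  have hnpos : (0 : ℝ) < n := by positivity
  have hτpos : 0 < τ := by rw [hτ]; positivity
  have hτT : τ ≤ T := by
    rw [hτ]
    rw [div_le_iff₀ hnpos]
    have h1n : (1:ℝ) ≤ n := by exact_mod_cast Nat.one_le_of_lt hn
    nlinarith
  have hsub : Set.Icc (0 : ℝ) τ ⊆ Set.Icc (0 : ℝ) T := Set.Icc_subset_Icc le_rfl hτT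
  have hΓpos : 0 < Real.Gamma α := Real.Gamma_pos_of_pos hα0
  have hBpos : 0 < B := by
    have h : 0 < α / Real.Gamma α := by positivity
    rw [hB]; linarith
  set M := sSup ((fun y => |f' y|) '' Set.Icc (0 : ℝ) τ) with hM
  have hcpt : IsCompact ((fun y => |f' y|) '' Set.Icc (0 : ℝ) τ) :=
    isCompact_Icc.image_of_continuousOn ((hf'.mono hsub).abs)
  have hne : ((fun y => |f' y|) '' Set.Icc (0 : ℝ) τ).Nonempty :=
    (Set.nonempty_Icc.2 hτpos.le).image _
  have hble : ∀ y ∈ Set.Icc (0 : ℝ) τ, |f' y| ≤ M := fun y hy =>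
    le_csSup hcpt.bddAbove (Set.mem_image_of_mem _ hy)
  have hM0 : 0 ≤ M :=
    le_trans (abs_nonneg _) (hble 0 (Set.mem_Icc.2 ⟨le_rfl, hτpos.le⟩))
  -- Lipschitz bound
  have hlip : ∀ y ∈ Set.Icc (0 : ℝ) τ, |f y - f τ| ≤ M * τ := by
    intro y hy
    have hτm : τ ∈ Set.Icc (0 : ℝ) τ := Set.mem_Icc.2 ⟨hτpos.le, le_rfl⟩
    have := (convex_Icc (0:ℝ) τ).norm_image_sub_le_of_norm_hasDerivWithin_le
      (f' := f') (fun x hx => (hf x (hsub hx)).mono hsub) hble hτm hy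
    calc |f y - f τ| ≤ M * ‖y - τ‖ := this
      _ ≤ M * τ := by
          apply mul_le_mul_of_nonneg_left _ hM0
          rw [Real.norm_eq_abs, abs_sub_le_iff]
          constructor <;> [linarith [hy.1, hy.2]; linarith [hy.1, hy.2]]
  have hkpos : (0:ℝ) < k := by positivity
  have hk1 : (1:ℝ) ≤ (k:ℝ) - 1 := by
    have : (2:ℝ) ≤ k := by exact_mod_cast hk2
    linarith
  -- kernel positivity on [0, τ]
  have hker : ∀ y ∈ Set.Icc (0 : ℝ) τ, τ ≤ t k - y := by
    intro y hy
    rw [ht]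
    nlinarith [hy.1, hy.2, hτpos]
  have hkerpos : ∀ y ∈ Set.Icc (0 : ℝ) τ, (0:ℝ) < t k - y := fun y hy =>
    lt_of_lt_of_le hτpos (hker y hy)
  -- continuity / integrability of the kernel
  have hcontker : ContinuousOn (fun y => (t k - y) ^ (α - 1)) (Set.Icc (0 : ℝ) τ) := by
    apply ContinuousOn.rpow_const
    · exact (continuous_const.sub continuous_id).continuousOn
    · exact fun x hx => Or.inl (ne_of_gt (hkerpos x hx))
  have huIcc : Set.uIcc (0:ℝ) τ = Set.Icc 0 τ := Set.uIcc_of_le hτpos.le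
  have hintker : IntervalIntegrable (fun y => (t k - y) ^ (α - 1)) volume 0 τ := by
    apply ContinuousOn.intervalIntegrable
    rwa [huIcc]
  have hcontf : ContinuousOn f (Set.Icc (0:ℝ) τ) := fun x hx =>
    ((hf x (hsub hx)).mono hsub).continuousWithinAt
  have hintfull : IntervalIntegrable (fun y => (f y - f τ) * (t k - y) ^ (α - 1)) volume 0 τ := by
    apply ContinuousOn.intervalIntegrable
    rw [huIcc]
    exact ((hcontf.sub continuousOn_const).mul hcontker)
  have hintbound : IntervalIntegrable (fun y => (M * τ) * (t k - y) ^ (α - 1)) volume 0 τ :=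
    (hintker.const_mul _)
  -- bound the integral
  have habs : |∫ y in (0:ℝ)..τ, (f y - f τ) * (t k - y) ^ (α - 1)|
      ≤ ∫ y in (0:ℝ)..τ, (M * τ) * (t k - y) ^ (α - 1) := by
    refine le_trans (intervalIntegral.abs_integral_le_integral_abs hτpos.le) ?_
    apply intervalIntegral.integral_mono_on hτpos.le hintfull.abs hintbound
    intro x hx
    rw [abs_mul, abs_of_nonneg (Real.rpow_nonneg (hkerpos x hx).le _)]
    exact mul_le_mul_of_nonneg_right (hlip x hx)
      (Real.rpow_nonneg (hkerpos x hx).le _)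
  -- compute the kernel integral
  have hcomp : (∫ y in (0:ℝ)..τ, (t k - y) ^ (α - 1))
      = ((t k) ^ α - (t k - τ) ^ α) / α := by
    rw [intervalIntegral.integral_comp_sub_left (fun x => x ^ (α - 1)) (t k)]
    rw [integral_rpow (Or.inl (by linarith))]
    rw [sub_zero, sub_add_cancel]
  have hkerint : (∫ y in (0:ℝ)..τ, (M * τ) * (t k - y) ^ (α - 1))
      = (M * τ) * (((t k) ^ α - (t k - τ) ^ α) / α) := by
    rw [intervalIntegral.integral_const_mul, hcomp]
  -- rewrite t k and b (k-1)
  have hbk : b (k - 1) = (k:ℝ) ^ α - ((k:ℝ) - 1) ^ α := by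
    rw [hb]
    have : ((k - 1 : ℕ) : ℝ) = (k:ℝ) - 1 := by
      have := Nat.cast_sub (le_trans one_le_two hk2) (R := ℝ) (m := 1) (n := k)
      simpa using this
    rw [this]
    ring_nf
  have htk : t k = (k:ℝ) * τ := ht k
  have hΨpos : 0 < Ψ := by rw [hΨ]; positivity
  have hΨabs : |Ψ * ∫ y in (0:ℝ)..τ, (f y - f τ) * (t k - y) ^ (α - 1)|
      = Ψ * |∫ y in (0:ℝ)..τ, (f y - f τ) * (t k - y) ^ (α - 1)| := by
    rw [abs_mul, abs_of_pos hΨpos]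
  rw [hΨabs]
  have hstep : Ψ * |∫ y in (0:ℝ)..τ, (f y - f τ) * (t k - y) ^ (α - 1)|
      ≤ Ψ * ((M * τ) * (((t k) ^ α - (t k - τ) ^ α) / α)) := by
    rw [← hkerint]
    exact mul_le_mul_of_nonneg_left habs hΨpos.le
  refine le_trans hstep (le_of_eq ?_)
  -- now pure algebra
  have hΓ1 : Real.Gamma (α + 1) = α * Real.Gamma α := Real.Gamma_add_one (ne_of_gt hα0)
  have h1 : (t k) ^ α = (k:ℝ) ^ α * τ ^ α := by
    rw [htk, Real.mul_rpow hkpos.le hτpos.le]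
  have h2 : (t k - τ) ^ α = ((k:ℝ) - 1) ^ α * τ ^ α := by
    have : t k - τ = ((k:ℝ) - 1) * τ := by rw [htk]; ring
    rw [this, Real.mul_rpow (by linarith) hτpos.le]
  have h3 : τ ^ ((1:ℝ) + α) = τ * τ ^ α := by
    rw [Real.rpow_add hτpos, Real.rpow_one]
  rw [h1, h2, h3, hbk, hΨ, hΓ1]
  field_simp
end

section
/- For every α > 0 and β > 0, the power series Σ_{k=0}^∞ z^k/Γ(αk+β) defining the Mittag–Leffler function E_{α,β} converges absolutely for every complex number z; that is, the series has infinite radius of convergence and E_{α,β} is an entire function. -/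
open Complex

/-!
Log-convexity of `Γ` on `(0, ∞)` compares the slopes of `log Γ` over `[t - 1, t]` and `[t, t + a]`,
giving `Γ(t) / Γ(t + a) ≤ (t - 1)^(-a)`. Hence the ratio of consecutive coefficients
`Γ(αk + β) / Γ(α(k + 1) + β)` tends to `0`, the ratio test makes the radius of convergence
infinite, and a power series is analytic on its disc of convergence.
-/

open Filter Topology FormalMultilinearSeries

namespace Real

theorem Gamma_div_Gamma_add_le_rpow {a t : ℝ} (ha : 0 < a) (ht : 1 < t) :
    Gamma t / Gamma (t + a) ≤ (t - 1) ^ (-a) := by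
  have ht₁ : 0 < t - 1 := by linarith
  have hslope := convexOn_log_Gamma.slope_mono_adjacent (x := t - 1) (y := t) (z := t + a)
    (Set.mem_Ioi.mpr ht₁) (Set.mem_Ioi.mpr (by linarith)) (by linarith) (by linarith)
  have hrec : log (Gamma t) = log (t - 1) + log (Gamma (t - 1)) := by
    rw [← log_mul ht₁.ne' (Gamma_pos_of_pos ht₁).ne', ← Gamma_add_one ht₁.ne', sub_add_cancel]
  simp only [Function.comp_apply, sub_sub_cancel, add_sub_cancel_left, div_one, hrec,
    add_sub_cancel_right, le_div_iff₀ ha] at hslope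
  rw [rpow_def_of_pos ht₁, div_eq_mul_inv, ← exp_log (Gamma_pos_of_pos (by linarith : 0 < t)),
    ← exp_log (Gamma_pos_of_pos (by linarith : 0 < t + a)), ← exp_neg, ← exp_add, exp_le_exp]
  linarith

theorem tendsto_Gamma_div_Gamma_add_atTop {a : ℝ} (ha : 0 < a) :
    Tendsto (fun t => Gamma t / Gamma (t + a)) atTop (𝓝 0) := by
  have hbound : Tendsto (fun t : ℝ => (t - 1) ^ (-a)) atTop (𝓝 0) :=
    (tendsto_rpow_neg_atTop ha).comp (tendsto_atTop_add_const_right _ (-1) tendsto_id)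
  refine tendsto_of_tendsto_of_tendsto_of_le_of_le' tendsto_const_nhds hbound ?_ ?_
  · filter_upwards [eventually_gt_atTop 0] with t ht
    exact div_nonneg (Gamma_pos_of_pos ht).le (Gamma_pos_of_pos (by linarith)).le
  · filter_upwards [eventually_gt_atTop 1] with t ht
    exact Gamma_div_Gamma_add_le_rpow ha ht

end Real

noncomputable def mittagLefflerSeries (α β : ℝ) : FormalMultilinearSeries ℂ ℂ ℂ :=
  ofScalars ℂ fun k : ℕ => (Gamma (α * k + β))⁻¹

theorem mittagLefflerSeries_apply (α β : ℝ) (k : ℕ) (z : ℂ) :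
    (mittagLefflerSeries α β k fun _ => z) = z ^ k / Gamma (α * k + β) := by
  rw [mittagLefflerSeries, ofScalars_apply_eq, smul_eq_mul, div_eq_inv_mul]

theorem mittagLefflerSeries_radius {α : ℝ} (hα : 0 < α) (β : ℝ) :
    (mittagLefflerSeries α β).radius = ⊤ := by
  have harg : Tendsto (fun n : ℕ => α * n + β) atTop atTop :=
    tendsto_atTop_add_const_right _ β (tendsto_natCast_atTop_atTop.const_mul_atTop hα)
  have hGamma (n : ℕ) : Gamma (α * n + β) = Real.Gamma (α * n + β) := by
    rw [← Gamma_ofReal]; push_cast; rfl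
  apply ofScalars_radius_eq_top_of_tendsto
  · filter_upwards [harg.eventually_gt_atTop 0] with n hn
    rw [hGamma]
    exact inv_ne_zero (ofReal_ne_zero.mpr (Real.Gamma_pos_of_pos hn).ne')
  · refine ((Real.tendsto_Gamma_div_Gamma_add_atTop hα).comp harg).congr' ?_
    filter_upwards [harg.eventually_gt_atTop 0] with n hn
    have hn' : 0 < α * (n + 1 : ℕ) + β := by push_cast; linarith
    rw [Function.comp_apply, norm_inv, norm_inv, inv_div_inv, hGamma, hGamma, norm_real, norm_real,
      Real.norm_of_nonneg (Real.Gamma_pos_of_pos hn).le,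
      Real.norm_of_nonneg (Real.Gamma_pos_of_pos hn').le]
    push_cast
    ring_nf

theorem mittagLefflerSeries_sum (α β : ℝ) :
    (mittagLefflerSeries α β).sum = fun z : ℂ => ∑' k : ℕ, z ^ k / Gamma (α * k + β) := by
  funext z
  simp only [FormalMultilinearSeries.sum, mittagLefflerSeries_apply]

theorem mittag_leffler_entire_general (α β : ℝ) (hα : 0 < α) :
    (∀ z : ℂ, Summable fun k : ℕ => ‖z ^ k / Complex.Gamma ((α : ℂ) * k + (β : ℂ))‖) ∧
      Differentiable ℂ fun z : ℂ => ∑' k : ℕ, z ^ k / Complex.Gamma ((α : ℂ) * k + (β : ℂ)) := by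
  have hradius := mittagLefflerSeries_radius hα β
  have hball (z : ℂ) : z ∈ Metric.eball 0 (mittagLefflerSeries α β).radius := by
    simp [hradius]
  refine ⟨fun z => ?_, fun z => ?_⟩
  · simpa only [mittagLefflerSeries_apply] using
      (mittagLefflerSeries α β).summable_norm_apply (hball z)
  · rw [← mittagLefflerSeries_sum]
    exact (((mittagLefflerSeries α β).hasFPowerSeriesOnBall (by simp [hradius])).analyticAt_of_mem
      (hball z)).differentiableAt

/-- The power series `Σ_{k=0}^∞ z^k / Γ(αk + β)` defining the Mittag–Leffler
function `E_{α,β}` converges absolutely for every `z ∈ ℂ`, and `E_{α,β}` is an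
entire function. -/
theorem mittag_leffler_entire (α β : ℝ) (hα : 0 < α) (hβ : 0 < β) :
    (∀ z : ℂ, Summable fun k : ℕ => ‖z ^ k / Complex.Gamma ((α : ℂ) * k + (β : ℂ))‖) ∧
      Differentiable ℂ fun z : ℂ => ∑' k : ℕ, z ^ k / Complex.Gamma ((α : ℂ) * k + (β : ℂ)) :=
  mittag_leffler_entire_general α β hα
end

section
/- Let α ∈ (0,1), λ > 0, and let p > 0 be a real number with p^α > λ. Then the Laplace transform of t ↦ E_α(−λ t^α) is ∫_0^∞ e^{−pt} E_α(−λ t^α) dt = p^{α−1}/(p^α + λ), where E_α(z) = Σ_{k=0}^∞ z^k/Γ(αk+1) is the Mittag–Leffler function. -/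
/-!
Expand `E_α` into its power series. By Euler's integral for `Γ`, the `k`-th term has Laplace
transform `c ^ k / p ^ (α k + 1)`, so the Laplace transform of `E_α (c t ^ α)` is the geometric
series `p⁻¹ ∑ (c / p ^ α) ^ k = p ^ (α - 1) / (p ^ α - c)`. The same computation with `|c|` shows
that the series converges absolutely as soon as `|c| < p ^ α`, which justifies exchanging sum and
integral. The theorem is the case `c = -λ`.
-/

open Set MeasureTheory Real

section LaplaceRpow

variable {p s : ℝ}

lemma integrableOn_exp_neg_mul_mul_rpow (hs : 0 < s + 1) (hp : 0 < p) :
    IntegrableOn (fun t : ℝ => exp (-p * t) * t ^ s) (Ioi 0) :=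
  (integrableOn_rpow_mul_exp_neg_mul_rpow (s := s) (by linarith) zero_lt_one hp).congr_fun
    (fun t _ => by dsimp only; rw [rpow_one, mul_comm]) measurableSet_Ioi

lemma integral_exp_neg_mul_mul_rpow (hs : 0 < s + 1) (hp : 0 < p) :
    ∫ t in Ioi (0 : ℝ), exp (-p * t) * t ^ s = Gamma (s + 1) / p ^ (s + 1) := by
  rw [div_eq_mul_inv, ← inv_rpow hp.le, ← one_div, mul_comm,
    ← integral_rpow_mul_exp_neg_mul_Ioi hs hp]
  refine setIntegral_congr_fun measurableSet_Ioi fun t _ => ?_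
  rw [add_sub_cancel_right, neg_mul, mul_comm]

end LaplaceRpow

section MittagLefflerTerm

variable {α p : ℝ}

lemma exp_neg_mul_mul_mittagLefflerTerm_eq (c : ℝ) (k : ℕ) {t : ℝ} (ht : 0 ≤ t) :
    exp (-p * t) * ((c * t ^ α) ^ k / Gamma (α * k + 1))
      = c ^ k / Gamma (α * k + 1) * (exp (-p * t) * t ^ (α * k)) := by
  rw [mul_pow, ← rpow_natCast (t ^ α), ← rpow_mul ht]
  ring

lemma norm_exp_neg_mul_mul_mittagLefflerTerm (hα : 0 ≤ α) (c : ℝ) (k : ℕ) {t : ℝ}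
    (ht : 0 ≤ t) :
    ‖exp (-p * t) * ((c * t ^ α) ^ k / Gamma (α * k + 1))‖
      = exp (-p * t) * ((|c| * t ^ α) ^ k / Gamma (α * k + 1)) := by
  have hΓ : 0 < Gamma (α * k + 1) := Gamma_pos_of_pos (by positivity)
  rw [norm_mul, norm_div, norm_pow, norm_mul, norm_eq_abs, norm_eq_abs, norm_eq_abs, norm_eq_abs,
    abs_of_pos (exp_pos _), abs_of_nonneg (rpow_nonneg ht α), abs_of_pos hΓ]

lemma integrableOn_exp_neg_mul_mul_mittagLefflerTerm (hα : 0 ≤ α) (hp : 0 < p) (c : ℝ)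
    (k : ℕ) :
    IntegrableOn (fun t : ℝ => exp (-p * t) * ((c * t ^ α) ^ k / Gamma (α * k + 1)))
      (Ioi 0) :=
  IntegrableOn.congr_fun ((integrableOn_exp_neg_mul_mul_rpow (by positivity) hp).const_mul _)
    (fun _ ht => (exp_neg_mul_mul_mittagLefflerTerm_eq c k (le_of_lt ht)).symm)
    measurableSet_Ioi

lemma integral_exp_neg_mul_mul_mittagLefflerTerm (hα : 0 ≤ α) (hp : 0 < p) (c : ℝ) (k : ℕ) :
    ∫ t in Ioi (0 : ℝ), exp (-p * t) * ((c * t ^ α) ^ k / Gamma (α * k + 1))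
      = p⁻¹ * (c / p ^ α) ^ k := by
  have hΓ : 0 < Gamma (α * k + 1) := Gamma_pos_of_pos (by positivity)
  rw [setIntegral_congr_fun measurableSet_Ioi
      (fun _ ht => exp_neg_mul_mul_mittagLefflerTerm_eq c k (le_of_lt ht)),
    integral_const_mul, integral_exp_neg_mul_mul_rpow (by positivity) hp,
    rpow_add_one hp.ne', rpow_mul hp.le, rpow_natCast, div_pow]
  field_simp

theorem integral_exp_neg_mul_mul_tsum_mittagLeffler (hα : 0 ≤ α) (hp : 0 < p) {c : ℝ}
    (hc : |c| < p ^ α) :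
    ∫ t in Ioi (0 : ℝ), exp (-p * t) * ∑' k : ℕ, (c * t ^ α) ^ k / Gamma (α * k + 1)
      = p ^ (α - 1) / (p ^ α - c) := by
  have hpα : 0 < p ^ α := rpow_pos_of_pos hp α
  have hratio : |c / p ^ α| < 1 := by
    rwa [abs_div, abs_of_pos hpα, div_lt_one hpα]
  have hsummable_norm : Summable fun k : ℕ => ∫ t in Ioi (0 : ℝ),
      ‖exp (-p * t) * ((c * t ^ α) ^ k / Gamma (α * k + 1))‖ := by
    have habs : ∀ k : ℕ, ∫ t in Ioi (0 : ℝ),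
        ‖exp (-p * t) * ((c * t ^ α) ^ k / Gamma (α * k + 1))‖ = p⁻¹ * (|c| / p ^ α) ^ k := by
      intro k
      rw [setIntegral_congr_fun measurableSet_Ioi
          (fun _ ht => norm_exp_neg_mul_mul_mittagLefflerTerm hα c k (le_of_lt ht)),
        integral_exp_neg_mul_mul_mittagLefflerTerm hα hp]
    simp only [habs]
    refine (summable_geometric_of_lt_one (by positivity) ?_).mul_left _
    rwa [div_lt_one hpα]
  calc ∫ t in Ioi (0 : ℝ), exp (-p * t) * ∑' k : ℕ, (c * t ^ α) ^ k / Gamma (α * k + 1)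
      = ∫ t in Ioi (0 : ℝ), ∑' k : ℕ, exp (-p * t) * ((c * t ^ α) ^ k / Gamma (α * k + 1)) := by
        simp only [tsum_mul_left]
    _ = ∑' k : ℕ, ∫ t in Ioi (0 : ℝ), exp (-p * t) * ((c * t ^ α) ^ k / Gamma (α * k + 1)) :=
        (integral_tsum_of_summable_integral_norm
          (integrableOn_exp_neg_mul_mul_mittagLefflerTerm hα hp c) hsummable_norm).symm
    _ = ∑' k : ℕ, p⁻¹ * (c / p ^ α) ^ k := by
        simp only [integral_exp_neg_mul_mul_mittagLefflerTerm hα hp]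
    _ = p ^ (α - 1) / (p ^ α - c) := by
        rw [tsum_mul_left, tsum_geometric_of_abs_lt_one hratio, rpow_sub_one hp.ne']
        have : p ^ α - c ≠ 0 := by linarith [le_abs_self c]
        field_simp

end MittagLefflerTerm

/-- Laplace transform of the Mittag–Leffler function `t ↦ E_α(−λ t^α)`:
`∫_0^∞ e^{−pt} E_α(−λ t^α) dt = p^{α−1}/(p^α + λ)` for `p > 0` with `p^α > λ`. -/
theorem laplace_mittag_leffler
    (α lam p : ℝ) (hα : α ∈ Set.Ioo (0 : ℝ) 1) (hlam : 0 < lam)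
    (hp : 0 < p) (hpα : lam < p ^ α)
    (E : ℝ → ℝ) (hE : ∀ z : ℝ, E z = ∑' k : ℕ, z ^ k / Real.Gamma (α * k + 1)) :
    ∫ t in Set.Ioi (0 : ℝ), Real.exp (-p * t) * E (-lam * t ^ α)
      = p ^ (α - 1) / (p ^ α + lam) := by
  simp only [hE]
  rw [integral_exp_neg_mul_mul_tsum_mittagLeffler hα.1.le hp (by rwa [abs_neg, abs_of_pos hlam]),
    sub_neg_eq_add]
end

section
/- Let α ∈ (0,1), B(α) = 1 − α + α/Γ(α), and let u : [0,∞) → ℝ be continuously differentiable with u and u′ of exponential order (there exist M, c > 0 with |u(t)| ≤ M e^{ct} and |u′(t)| ≤ M e^{ct} for all t ≥ 0). Then for every real p with p > c and p^α > α/(1−α), the Laplace transform of the Atangana–Baleanu–Caputo derivative of u satisfies ∫_0^∞ e^{−pt} (ABC D^α u)(t) dt = B(α) · (p^α ũ(p) − p^{α−1} u(0)) / ((1−α) p^α + α), where ũ(p) = ∫_0^∞ e^{−pt} u(t) dt. -/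
/-!
Write `l = α/(1-α)`. Up to the factor `B/(1-α)`, the ABC derivative is the convolution on `[0, t]`
of `u'` with the kernel `r ↦ E_α(-l r^α)`, so its Laplace transform is the product of those of
`u'` and of the kernel. The former is `p ũ(p) - u(0)`. For the kernel, integrate the
Mittag-Leffler series termwise: `L[r^{αk}](p) = Γ(αk+1)/p^{αk+1}` cancels the Gamma factors and
leaves the geometric series `∑ (-l/p^α)^k / p`, absolutely convergent because `p^α > l`, with sum
`p^{α-1}/(p^α + l)`. Termwise integration needs no pointwise convergence of the series: the
summable `L¹` norms make the series converge in `L¹`.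
-/

open Set MeasureTheory intervalIntegral Real Filter Topology

theorem MeasureTheory.integrable_tsum_of_summable_integral_norm {X E ι : Type*}
    [MeasurableSpace X] {μ : Measure X} [NormedAddCommGroup E] [CompleteSpace E] [Countable ι]
    {F : ι → X → E} (hF_int : ∀ i, Integrable (F i) μ)
    (hF_sum : Summable fun i ↦ ∫ a, ‖F i a‖ ∂μ) :
    Integrable (fun a ↦ ∑' i, F i a) μ := by
  have hnorm : ∑' i, ‖(hF_int i).toL1 (F i)‖ₑ ≠ ⊤ := by
    simp_rw [Integrable.enorm_toL1, ← ofReal_integral_norm_eq_lintegral_enorm (hF_int _)]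
    rw [← ENNReal.ofReal_tsum_of_nonneg (fun i ↦ integral_nonneg fun a ↦ norm_nonneg _) hF_sum]
    exact ENNReal.ofReal_ne_top
  refine (L1.integrable_coeFn (∑' i, (hF_int i).toL1 (F i))).congr ?_
  filter_upwards [Lp.coeFn_tsum hnorm, ae_all_iff.2 fun i ↦ (hF_int i).coeFn_toL1]
    with a hsum hF
  rw [hsum]
  exact tsum_congr hF

noncomputable def laplace (h : ℝ → ℝ) (p : ℝ) : ℝ :=
  ∫ t in Ioi 0, exp (-p * t) * h t

def LaplaceIntegrable (h : ℝ → ℝ) (p : ℝ) : Prop :=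
  IntegrableOn (fun t ↦ exp (-p * t) * h t) (Ioi 0)

noncomputable def mittagLeffler (α z : ℝ) : ℝ :=
  ∑' k : ℕ, z ^ k / Gamma (α * k + 1)

section Laplace

variable {h f g : ℝ → ℝ} {p : ℝ}

theorem laplace_const_mul (a : ℝ) : laplace (fun t ↦ a * h t) p = a * laplace h p := by
  simp only [laplace, ← MeasureTheory.integral_const_mul, mul_left_comm]

theorem LaplaceIntegrable.const_mul (hh : LaplaceIntegrable h p) (a : ℝ) :
    LaplaceIntegrable (fun t ↦ a * h t) p := by
  unfold LaplaceIntegrable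
  simp_rw [mul_left_comm _ a]
  exact Integrable.const_mul hh a

theorem norm_exp_neg_mul_mul_le {M c t : ℝ} (hbd : |h t| ≤ M * exp (c * t)) :
    ‖exp (-p * t) * h t‖ ≤ M * exp (-(p - c) * t) :=
  calc ‖exp (-p * t) * h t‖ = exp (-p * t) * |h t| := by
        rw [norm_mul, norm_of_nonneg (exp_pos _).le, norm_eq_abs]
    _ ≤ exp (-p * t) * (M * exp (c * t)) := by gcongr
    _ = M * exp (-(p - c) * t) := by rw [mul_left_comm, ← exp_add]; ring_nf

theorem laplaceIntegrable_of_abs_le_exp {M c : ℝ} (hcp : c < p)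
    (hmeas : AEStronglyMeasurable h (volume.restrict (Ioi 0)))
    (hbd : ∀ t, 0 ≤ t → |h t| ≤ M * exp (c * t)) : LaplaceIntegrable h p := by
  refine Integrable.mono' ((exp_neg_integrableOn_Ioi 0 (sub_pos.2 hcp)).const_mul M)
    ((continuous_exp.comp (continuous_const_mul (-p))).aestronglyMeasurable.mul hmeas) ?_
  filter_upwards [ae_restrict_mem measurableSet_Ioi] with t ht
  exact norm_exp_neg_mul_mul_le (hbd t (le_of_lt ht))

theorem tendsto_exp_neg_mul_mul_of_abs_le_exp {M c : ℝ} (hcp : c < p)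
    (hbd : ∀ t, 0 ≤ t → |h t| ≤ M * exp (c * t)) :
    Tendsto (fun t ↦ exp (-p * t) * h t) atTop (𝓝 0) := by
  have hdecay : Tendsto (fun t ↦ M * exp (-(p - c) * t)) atTop (𝓝 0) := by
    simpa using ((tendsto_exp_atBot.comp
      (tendsto_id.const_mul_atTop_of_neg (neg_neg_of_pos (sub_pos.2 hcp)))).const_mul M)
  refine squeeze_zero_norm' ?_ hdecay
  filter_upwards [eventually_ge_atTop 0] with t ht
  exact norm_exp_neg_mul_mul_le (hbd t ht)

theorem laplace_of_hasDerivWithinAt {u u' : ℝ → ℝ} {M c : ℝ} (hcp : c < p)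
    (hu : ∀ t ∈ Ici (0 : ℝ), HasDerivWithinAt u (u' t) (Ici 0) t)
    (hbd : ∀ t, 0 ≤ t → |u t| ≤ M * exp (c * t)) (hu' : LaplaceIntegrable u' p) :
    laplace u' p = p * laplace u p - u 0 := by
  have hucont : ContinuousOn u (Ici 0) := fun t ht ↦ (hu t ht).continuousWithinAt
  have huL : LaplaceIntegrable u p := laplaceIntegrable_of_abs_le_exp hcp
    ((hucont.mono Ioi_subset_Ici_self).aestronglyMeasurable measurableSet_Ioi) hbd
  have hderiv : ∀ t ∈ Ioi (0 : ℝ), HasDerivAt (fun t ↦ exp (-p * t) * u t)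
      (exp (-p * t) * u' t - p * (exp (-p * t) * u t)) t := by
    intro t ht
    refine (((hasDerivAt_id' t).const_mul (-p)).exp.fun_mul
      ((hu t (mem_Ioi.1 ht).le).hasDerivAt (Ici_mem_nhds ht))).congr_deriv ?_
    ring
  have hcont : ContinuousWithinAt (fun t ↦ exp (-p * t) * u t) (Ici 0) 0 :=
    (continuous_exp.comp (continuous_const_mul (-p))).continuousWithinAt.mul
      (hucont 0 self_mem_Ici)
  have hFTC := integral_Ioi_of_hasDerivAt_of_tendsto hcont hderiv
    (hu'.sub (Integrable.const_mul huL p)) (tendsto_exp_neg_mul_mul_of_abs_le_exp hcp hbd)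
  rw [integral_sub hu' (Integrable.const_mul huL p), MeasureTheory.integral_const_mul] at hFTC
  simp only [mul_zero, exp_zero, one_mul, zero_sub] at hFTC
  rw [laplace, laplace]
  linarith

theorem laplaceIntegrable_rpow {e : ℝ} (he : -1 < e) (hp : 0 < p) :
    LaplaceIntegrable (fun t ↦ t ^ e) p :=
  (integrableOn_rpow_mul_exp_neg_mul_rpow he one_pos hp).congr_fun
    (fun t _ ↦ by dsimp only; rw [rpow_one, mul_comm]) measurableSet_Ioi

theorem laplace_rpow {e : ℝ} (he : -1 < e) (hp : 0 < p) :
    laplace (fun t ↦ t ^ e) p = Gamma (e + 1) / p ^ (e + 1) := by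
  have h := integral_rpow_mul_exp_neg_mul_Ioi (by linarith : 0 < e + 1) hp
  rw [add_sub_cancel_right, one_div, inv_rpow hp.le, ← div_eq_inv_mul] at h
  rw [laplace, ← h]
  congr 1
  ext t
  rw [neg_mul, mul_comm]

theorem laplace_convolution (hf : LaplaceIntegrable f p) (hg : LaplaceIntegrable g p) :
    laplace (fun x ↦ ∫ t in 0..x, f t * g (x - t)) p = laplace f p * laplace g p := by
  have h := integral_posConvolution hf hg (ContinuousLinearMap.mul ℝ ℝ)
  simp only [ContinuousLinearMap.mul_apply'] at h
  rw [laplace, laplace, laplace, ← h]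
  refine setIntegral_congr_fun measurableSet_Ioi fun x _ ↦ ?_
  simp only [← intervalIntegral.integral_const_mul]
  refine intervalIntegral.integral_congr fun t _ ↦ ?_
  rw [mul_mul_mul_comm, ← exp_add]
  ring_nf

end Laplace

section MittagLeffler

variable {α a p : ℝ}

theorem exp_mul_mittagLeffler_eq_tsum (p : ℝ) {r : ℝ} (hr : 0 ≤ r) :
    exp (-p * r) * mittagLeffler α (a * r ^ α)
      = ∑' k : ℕ, exp (-p * r) * (a ^ k / Gamma (α * k + 1) * r ^ (α * k)) := by
  rw [mittagLeffler, ← tsum_mul_left]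
  congr 1
  ext k
  rw [mul_pow, ← rpow_natCast (r ^ α), ← rpow_mul hr]
  ring

theorem laplaceIntegrable_mittagLeffler_term (hα : 0 ≤ α) (hp : 0 < p) (a : ℝ) (k : ℕ) :
    LaplaceIntegrable (fun r ↦ a ^ k / Gamma (α * k + 1) * r ^ (α * k)) p := by
  have hk : 0 ≤ α * k := by positivity
  exact (laplaceIntegrable_rpow (by linarith) hp).const_mul _

theorem laplace_mittagLeffler_term (hα : 0 ≤ α) (hp : 0 < p) (a : ℝ) (k : ℕ) :
    laplace (fun r ↦ a ^ k / Gamma (α * k + 1) * r ^ (α * k)) p = (a / p ^ α) ^ k / p := by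
  have hk : 0 ≤ α * k := by positivity
  rw [laplace_const_mul, laplace_rpow (by linarith) hp, rpow_add hp, rpow_one, rpow_mul hp.le,
    rpow_natCast, div_pow]
  field_simp [(Gamma_pos_of_pos (by linarith : 0 < α * k + 1)).ne']

theorem summable_integral_norm_mittagLeffler_term (hα : 0 ≤ α) (hp : 0 < p) (ha : |a| < p ^ α) :
    Summable fun k : ℕ ↦
      ∫ r in Ioi 0, ‖exp (-p * r) * (a ^ k / Gamma (α * k + 1) * r ^ (α * k))‖ := by
  have hterm (k : ℕ) : ∫ r in Ioi 0, ‖exp (-p * r) * (a ^ k / Gamma (α * k + 1) * r ^ (α * k))‖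
      = (|a| / p ^ α) ^ k / p := by
    rw [← laplace_mittagLeffler_term hα hp |a| k]
    refine setIntegral_congr_fun measurableSet_Ioi fun r hr ↦ ?_
    rw [norm_mul, norm_mul, norm_div, norm_pow, norm_of_nonneg (exp_pos _).le,
      norm_of_nonneg (Gamma_pos_of_pos (by positivity)).le,
      norm_of_nonneg (rpow_nonneg (le_of_lt hr) _), norm_eq_abs]
  simp_rw [hterm]
  have hpα : 0 < p ^ α := rpow_pos_of_pos hp α
  exact (summable_geometric_of_lt_one (div_nonneg (abs_nonneg a) hpα.le)
    ((div_lt_one hpα).2 ha)).div_const p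

theorem laplaceIntegrable_mittagLeffler (hα : 0 ≤ α) (hp : 0 < p) (ha : |a| < p ^ α) :
    LaplaceIntegrable (fun r ↦ mittagLeffler α (a * r ^ α)) p := by
  refine (integrable_tsum_of_summable_integral_norm (fun k ↦ ?_)
    (summable_integral_norm_mittagLeffler_term hα hp ha)).congr ?_
  · exact laplaceIntegrable_mittagLeffler_term hα hp a k
  · filter_upwards [ae_restrict_mem measurableSet_Ioi] with r hr
    exact (exp_mul_mittagLeffler_eq_tsum p (le_of_lt hr)).symm

theorem laplace_mittagLeffler (hα : 0 ≤ α) (hp : 0 < p) (ha : |a| < p ^ α) :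
    laplace (fun r ↦ mittagLeffler α (a * r ^ α)) p = p ^ (α - 1) / (p ^ α - a) := by
  have hratio : |a / p ^ α| < 1 := by
    rw [abs_div, abs_of_pos (rpow_pos_of_pos hp α)]
    exact (div_lt_one (by positivity)).2 ha
  calc laplace (fun r ↦ mittagLeffler α (a * r ^ α)) p
      = ∫ r in Ioi 0, ∑' k : ℕ, exp (-p * r) * (a ^ k / Gamma (α * k + 1) * r ^ (α * k)) :=
        setIntegral_congr_fun measurableSet_Ioi fun r hr ↦
          exp_mul_mittagLeffler_eq_tsum p (le_of_lt hr)
    _ = ∑' k : ℕ, (a / p ^ α) ^ k / p := by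
        rw [← integral_tsum_of_summable_integral_norm
          (laplaceIntegrable_mittagLeffler_term hα hp a)
          (summable_integral_norm_mittagLeffler_term hα hp ha)]
        exact tsum_congr (laplace_mittagLeffler_term hα hp a)
    _ = p ^ (α - 1) / (p ^ α - a) := by
        have hpα : 0 < p ^ α := rpow_pos_of_pos hp α
        have hne : p ^ α - a ≠ 0 := by linarith [le_abs_self a]
        rw [tsum_div_const, tsum_geometric_of_abs_lt_one hratio, rpow_sub_one hp.ne']
        field_simp

end MittagLeffler

theorem laplace_abc_derivative_general
    (α : ℝ) (hα : α ∈ Set.Ioo (0 : ℝ) 1)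
    (B : ℝ)
    (u u' : ℝ → ℝ)
    (hu : ∀ t ∈ Set.Ici (0 : ℝ), HasDerivWithinAt u (u' t) (Set.Ici (0 : ℝ)) t)
    (hu' : ContinuousOn u' (Set.Ici (0 : ℝ)))
    (M c : ℝ) (hc : 0 < c)
    (hubd : ∀ t : ℝ, 0 ≤ t → |u t| ≤ M * Real.exp (c * t))
    (hu'bd : ∀ t : ℝ, 0 ≤ t → |u' t| ≤ M * Real.exp (c * t))
    (E : ℝ → ℝ) (hE : ∀ z : ℝ, E z = ∑' k : ℕ, z ^ k / Real.Gamma (α * k + 1))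
    (D : ℝ → ℝ)
    (hD : ∀ t : ℝ, D t
        = (B / (1 - α)) * ∫ s in (0 : ℝ)..t, u' s * E (-(α / (1 - α)) * (t - s) ^ α))
    (p : ℝ) (hpc : c < p) (hpα : α / (1 - α) < p ^ α) :
    ∫ t in Set.Ioi (0 : ℝ), Real.exp (-p * t) * D t
      = B * (p ^ α * (∫ t in Set.Ioi (0 : ℝ), Real.exp (-p * t) * u t)
          - p ^ (α - 1) * u 0) / ((1 - α) * p ^ α + α) := by
  obtain ⟨hα0, hα1⟩ := hα
  have hp : 0 < p := hc.trans hpc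
  have hkernel : |-(α / (1 - α))| < p ^ α := by
    rwa [abs_neg, abs_of_pos (div_pos hα0 (sub_pos.2 hα1))]
  have hu'L : LaplaceIntegrable u' p := laplaceIntegrable_of_abs_le_exp hpc
    ((hu'.mono Ioi_subset_Ici_self).aestronglyMeasurable measurableSet_Ioi) hu'bd
  obtain rfl : E = mittagLeffler α := funext hE
  obtain rfl : D = fun t ↦ B / (1 - α) *
      ∫ s in 0..t, u' s * mittagLeffler α (-(α / (1 - α)) * (t - s) ^ α) := funext hD
  change laplace _ p = B * (p ^ α * laplace u p - p ^ (α - 1) * u 0) / ((1 - α) * p ^ α + α)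
  rw [laplace_const_mul,
    laplace_convolution hu'L (laplaceIntegrable_mittagLeffler hα0.le hp hkernel),
    laplace_of_hasDerivWithinAt hpc hu hubd hu'L, laplace_mittagLeffler hα0.le hp hkernel,
    rpow_sub_one hp.ne']
  have h1α : 0 < 1 - α := sub_pos.2 hα1
  have hden : 0 < (1 - α) * p ^ α + α := by positivity
  have hsum : p ^ α - -(α / (1 - α)) = ((1 - α) * p ^ α + α) / (1 - α) := by
    field_simp
    ring
  rw [hsum]
  field_simp

/-- Laplace transform of the Atangana–Baleanu–Caputo fractional derivative
`(ABC D^α u)(t) = (B(α)/(1−α)) ∫_0^t u'(s) E_α(−(α/(1−α))(t−s)^α) ds`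
of a continuously differentiable function `u` of exponential order:
`L[ABC D^α u](p) = B(α)(p^α ũ(p) − p^{α−1} u(0)) / ((1−α)p^α + α)`. -/
theorem laplace_abc_derivative
    (α : ℝ) (hα : α ∈ Set.Ioo (0 : ℝ) 1)
    (B : ℝ) (hB : B = 1 - α + α / Real.Gamma α)
    (u u' : ℝ → ℝ)
    (hu : ∀ t ∈ Set.Ici (0 : ℝ), HasDerivWithinAt u (u' t) (Set.Ici (0 : ℝ)) t)
    (hu' : ContinuousOn u' (Set.Ici (0 : ℝ)))
    (M c : ℝ) (hM : 0 < M) (hc : 0 < c)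
    (hubd : ∀ t : ℝ, 0 ≤ t → |u t| ≤ M * Real.exp (c * t))
    (hu'bd : ∀ t : ℝ, 0 ≤ t → |u' t| ≤ M * Real.exp (c * t))
    (E : ℝ → ℝ) (hE : ∀ z : ℝ, E z = ∑' k : ℕ, z ^ k / Real.Gamma (α * k + 1))
    (D : ℝ → ℝ)
    (hD : ∀ t : ℝ, D t
        = (B / (1 - α)) * ∫ s in (0 : ℝ)..t, u' s * E (-(α / (1 - α)) * (t - s) ^ α))
    (p : ℝ) (hpc : c < p) (hpα : α / (1 - α) < p ^ α) :
    ∫ t in Set.Ioi (0 : ℝ), Real.exp (-p * t) * D t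
      = B * (p ^ α * (∫ t in Set.Ioi (0 : ℝ), Real.exp (-p * t) * u t)
          - p ^ (α - 1) * u 0) / ((1 - α) * p ^ α + α) :=
  laplace_abc_derivative_general α hα B u u' hu hu' M c hc hubd hu'bd E hE D hD p hpc hpα
end

section
/- Let E be a real Banach space, α ∈ (0,1), B(α) = 1 − α + α/Γ(α), let g : E → E be Lipschitz continuous with constant C ≥ 0, let φ_c ∈ E, and let T₁ > 0. Define ψ on the space C([0,T₁]; E) of continuous E-valued functions with the supremum norm by ψ(φ)(t) = φ_c + ((1−α)/B(α)) g(φ(t)) + (α/(B(α)Γ(α))) ∫_0^t (t−s)^{α−1} g(φ(s)) ds. Then ψ maps C([0,T₁]; E) into itself and is Lipschitz continuous with constant C · ( (1−α)/B(α) + T₁^α/(B(α)Γ(α)) ); in particular, if C · ( (1−α)/B(α) + T₁^α/(B(α)Γ(α)) ) < 1, then ψ is a contraction. -/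
/-!
The substitution `s = t v` writes the weakly singular integral as
`t ^ α • ∫ v in 0..1, (1 - v) ^ (α - 1) • h (t v)`, whose integrand is dominated by
`M (1 - v) ^ (α - 1)`, with `M` a bound of `‖h‖` on `[0, T₁]`, uniformly in `t ∈ [0, T₁]`;
dominated convergence then gives continuity.
The Lipschitz bound is the triangle inequality together with
`∫ s in 0..t, (t - s) ^ (α - 1) = t ^ α / α ≤ T₁ ^ α / α`.
-/

open Set MeasureTheory intervalIntegral

noncomputable section

variable {E : Type*} [NormedAddCommGroup E] [NormedSpace ℝ E] {α : ℝ}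

theorem intervalIntegrable_sub_rpow {r : ℝ} (hr : -1 < r) (t a b : ℝ) :
    IntervalIntegrable (fun s => (t - s) ^ r) volume a b := by
  simpa using (intervalIntegrable_rpow' hr (a := t - a) (b := t - b)).comp_sub_left t

theorem integral_sub_rpow (hα : 0 < α) (t : ℝ) :
    ∫ s in (0 : ℝ)..t, (t - s) ^ (α - 1) = t ^ α / α := by
  rw [integral_comp_sub_left (fun s => s ^ (α - 1)), sub_self, sub_zero,
    integral_rpow (Or.inl (by linarith)), sub_add_cancel, Real.zero_rpow hα.ne', sub_zero]

theorem intervalIntegrable_sub_rpow_smul (hα : 0 < α) {t : ℝ} {h : ℝ → E}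
    (hh : ContinuousOn h (uIcc 0 t)) :
    IntervalIntegrable (fun s => (t - s) ^ (α - 1) • h s) volume 0 t :=
  (intervalIntegrable_sub_rpow (by linarith) t 0 t).smul_continuousOn hh

theorem norm_integral_sub_rpow_smul_le (hα : 0 < α) {t M : ℝ} (ht : 0 ≤ t) {h : ℝ → E}
    (hM : ∀ s ∈ Ioc 0 t, ‖h s‖ ≤ M) :
    ‖∫ s in (0 : ℝ)..t, (t - s) ^ (α - 1) • h s‖ ≤ M * (t ^ α / α) := by
  rw [← integral_sub_rpow hα, ← intervalIntegral.integral_const_mul]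
  refine norm_integral_le_of_norm_le ht (ae_of_all _ fun s hs => ?_)
    ((intervalIntegrable_sub_rpow (by linarith) t 0 t).const_mul M)
  have hk : 0 ≤ (t - s) ^ (α - 1) := Real.rpow_nonneg (sub_nonneg.2 hs.2) _
  rw [norm_smul, Real.norm_of_nonneg hk, mul_comm]
  exact mul_le_mul_of_nonneg_right (hM s hs) hk

theorem integral_sub_rpow_smul_eq_rpow_smul (hα : 0 < α) {t : ℝ} (ht : 0 ≤ t) (h : ℝ → E) :
    ∫ s in (0 : ℝ)..t, (t - s) ^ (α - 1) • h s
      = t ^ α • ∫ v in (0 : ℝ)..1, (1 - v) ^ (α - 1) • h (t * v) := by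
  have hscale : ∀ v ∈ uIcc (0 : ℝ) 1,
      (t - t * v) ^ (α - 1) • h (t * v) = t ^ (α - 1) • (1 - v) ^ (α - 1) • h (t * v) := by
    intro v hv
    rw [uIcc_of_le zero_le_one] at hv
    rw [← mul_one_sub, Real.mul_rpow ht (sub_nonneg.2 hv.2), mul_smul]
  have hsubst := smul_integral_comp_mul_left (a := 0) (b := 1)
    (fun s => (t - s) ^ (α - 1) • h s) t
  rw [mul_zero, mul_one] at hsubst
  rw [← hsubst, integral_congr hscale, intervalIntegral.integral_smul, smul_smul,
    ← Real.rpow_one_add' ht (by linarith), add_sub_cancel]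

theorem continuousOn_integral_one_sub_rpow_smul_comp_mul (hα : 0 < α) {T : ℝ} {h : ℝ → E}
    (hh : ContinuousOn h (Icc 0 T)) :
    ContinuousOn (fun t => ∫ v in (0 : ℝ)..1, (1 - v) ^ (α - 1) • h (t * v)) (Icc 0 T) := by
  obtain ⟨M, hM⟩ := isCompact_Icc.exists_bound_of_continuousOn hh
  have hmem : ∀ t ∈ Icc 0 T, ∀ v ∈ Icc (0 : ℝ) 1, t * v ∈ Icc 0 T := fun t ht v hv =>
    ⟨mul_nonneg ht.1 hv.1, (mul_le_of_le_one_right ht.1 hv.2).trans ht.2⟩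
  have hkernel := intervalIntegrable_sub_rpow (by linarith : -1 < α - 1) 1 0 1
  intro t₀ ht₀
  refine continuousWithinAt_of_dominated_interval (bound := fun v => M * (1 - v) ^ (α - 1))
    (eventually_nhdsWithin_of_forall fun t ht => ?_)
    (eventually_nhdsWithin_of_forall fun t ht => ae_of_all _ fun v hv => ?_)
    (hkernel.const_mul M) (ae_of_all _ fun v hv => ?_)
  · rw [← uIcc_of_le zero_le_one] at hmem
    exact (hkernel.smul_continuousOn (hh.comp (continuousOn_const.mul continuousOn_id)
      (hmem t ht))).def'.aestronglyMeasurable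
  · rw [uIoc_of_le zero_le_one] at hv
    have hk : 0 ≤ (1 - v) ^ (α - 1) := Real.rpow_nonneg (sub_nonneg.2 hv.2) _
    rw [norm_smul, Real.norm_of_nonneg hk, mul_comm]
    exact mul_le_mul_of_nonneg_right (hM _ (hmem t ht v (Ioc_subset_Icc_self hv))) hk
  · rw [uIoc_of_le zero_le_one] at hv
    exact continuousWithinAt_const.smul ((hh.comp (continuousOn_id.mul continuousOn_const)
      fun t ht => hmem t ht v (Ioc_subset_Icc_self hv)) t₀ ht₀)

theorem continuousOn_integral_sub_rpow_smul (hα : 0 < α) {T : ℝ} {h : ℝ → E}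
    (hh : ContinuousOn h (Icc 0 T)) :
    ContinuousOn (fun t => ∫ s in (0 : ℝ)..t, (t - s) ^ (α - 1) • h s) (Icc 0 T) :=
  ((continuousOn_id.rpow_const fun _ _ => Or.inr hα.le).smul
      (continuousOn_integral_one_sub_rpow_smul_comp_mul hα hh)).congr
    fun _ ht => integral_sub_rpow_smul_eq_rpow_smul hα ht.1 h

def picardOperator (α a b : ℝ) (x₀ : E) (h : ℝ → E) (t : ℝ) : E :=
  x₀ + a • h t + b • ∫ s in (0 : ℝ)..t, (t - s) ^ (α - 1) • h s

theorem continuousOn_picardOperator (hα : 0 < α) (a b : ℝ) (x₀ : E) {T : ℝ} {h : ℝ → E}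
    (hh : ContinuousOn h (Icc 0 T)) :
    ContinuousOn (picardOperator α a b x₀ h) (Icc 0 T) :=
  (continuousOn_const.add (hh.const_smul a)).add
    ((continuousOn_integral_sub_rpow_smul hα hh).const_smul b)

theorem picardOperator_sub_picardOperator (hα : 0 < α) (a b : ℝ) (x₀ : E) {t : ℝ}
    {h₁ h₂ : ℝ → E} (hh₁ : ContinuousOn h₁ (uIcc 0 t)) (hh₂ : ContinuousOn h₂ (uIcc 0 t)) :
    picardOperator α a b x₀ h₁ t - picardOperator α a b x₀ h₂ t
      = a • (h₁ t - h₂ t) + b • ∫ s in (0 : ℝ)..t, (t - s) ^ (α - 1) • (h₁ s - h₂ s) := by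
  simp only [picardOperator, smul_sub]
  rw [integral_sub (intervalIntegrable_sub_rpow_smul hα hh₁)
    (intervalIntegrable_sub_rpow_smul hα hh₂), smul_sub]
  abel

theorem norm_picardOperator_sub_le (hα : 0 < α) {a b : ℝ} (ha : 0 ≤ a) (hb : 0 ≤ b) (x₀ : E)
    {t M : ℝ} (ht : 0 ≤ t) {h₁ h₂ : ℝ → E} (hh₁ : ContinuousOn h₁ (Icc 0 t))
    (hh₂ : ContinuousOn h₂ (Icc 0 t)) (hM : ∀ s ∈ Icc 0 t, ‖h₁ s - h₂ s‖ ≤ M) :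
    ‖picardOperator α a b x₀ h₁ t - picardOperator α a b x₀ h₂ t‖
      ≤ M * (a + b * (t ^ α / α)) := by
  rw [← uIcc_of_le ht] at hh₁ hh₂
  rw [picardOperator_sub_picardOperator hα a b x₀ hh₁ hh₂]
  calc _ ≤ a * ‖h₁ t - h₂ t‖
          + b * ‖∫ s in (0 : ℝ)..t, (t - s) ^ (α - 1) • (h₁ s - h₂ s)‖ := by
        refine (norm_add_le _ _).trans_eq ?_
        rw [norm_smul, norm_smul, Real.norm_of_nonneg ha, Real.norm_of_nonneg hb]
    _ ≤ a * M + b * (M * (t ^ α / α)) := by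
        gcongr
        · exact hM t ⟨ht, le_rfl⟩
        · exact norm_integral_sub_rpow_smul_le hα ht fun s hs => hM s (Ioc_subset_Icc_self hs)
    _ = M * (a + b * (t ^ α / α)) := by ring

end

theorem ab_picard_operator_lipschitz_general
    {E : Type*} [NormedAddCommGroup E] [NormedSpace ℝ E]
    (α : ℝ) (hα : α ∈ Set.Ioo (0 : ℝ) 1)
    (B : ℝ) (hB : B = 1 - α + α / Real.Gamma α)
    (g : E → E) (C : ℝ) (hC : 0 ≤ C)
    (hg : ∀ x y : E, ‖g x - g y‖ ≤ C * ‖x - y‖)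
    (φc : E) (T₁ : ℝ)
    (ψ : (ℝ → E) → (ℝ → E))
    (hψ : ∀ (φ : ℝ → E) (t : ℝ),
      ψ φ t = φc + ((1 - α) / B) • g (φ t)
        + (α / (B * Real.Gamma α)) • ∫ s in (0 : ℝ)..t, (t - s) ^ (α - 1) • g (φ s)) :
    (∀ φ : ℝ → E, ContinuousOn φ (Set.Icc 0 T₁) → ContinuousOn (ψ φ) (Set.Icc 0 T₁)) ∧
      (∀ φ₁ φ₂ : ℝ → E, ContinuousOn φ₁ (Set.Icc 0 T₁) → ContinuousOn φ₂ (Set.Icc 0 T₁) →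
        ∀ t ∈ Set.Icc (0 : ℝ) T₁,
          ‖ψ φ₁ t - ψ φ₂ t‖
            ≤ C * ((1 - α) / B + T₁ ^ α / (B * Real.Gamma α)) *
                sSup ((fun s => ‖φ₁ s - φ₂ s‖) '' Set.Icc (0 : ℝ) T₁)) := by
  obtain ⟨hα0, hα1⟩ := hα
  have hΓ : 0 < Real.Gamma α := Real.Gamma_pos_of_pos hα0
  have hB0 : 0 < B := hB ▸ by linarith [div_pos hα0 hΓ]
  have hgc : Continuous g := (LipschitzWith.of_dist_le_mul (K := C.toNNReal) fun x y => by
    simpa only [dist_eq_norm, Real.coe_toNNReal C hC] using hg x y).continuous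
  have hψ_eq : ∀ φ, ψ φ = picardOperator α ((1 - α) / B) (α / (B * Real.Gamma α)) φc
      (fun s => g (φ s)) := fun φ => funext (hψ φ)
  refine ⟨fun φ hφ => hψ_eq φ ▸ continuousOn_picardOperator hα0 _ _ φc
    (hgc.comp_continuousOn hφ), fun φ₁ φ₂ hφ₁ hφ₂ t ht => ?_⟩
  set D := sSup ((fun s => ‖φ₁ s - φ₂ s‖) '' Icc (0 : ℝ) T₁)
  have hsub : Icc 0 t ⊆ Icc 0 T₁ := Icc_subset_Icc_right ht.2
  have hD : 0 ≤ D := (norm_nonneg _).trans ((hφ₁.sub hφ₂).norm.le_sSup_image_Icc ht)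
  have hgD : ∀ s ∈ Icc 0 t, ‖g (φ₁ s) - g (φ₂ s)‖ ≤ C * D := fun s hs =>
    (hg _ _).trans (mul_le_mul_of_nonneg_left ((hφ₁.sub hφ₂).norm.le_sSup_image_Icc (hsub hs)) hC)
  rw [hψ_eq, hψ_eq]
  refine (norm_picardOperator_sub_le hα0 (div_nonneg (by linarith) hB0.le) (by positivity) φc
    ht.1 ((hgc.comp_continuousOn hφ₁).mono hsub) ((hgc.comp_continuousOn hφ₂).mono hsub)
    hgD).trans ?_
  have hpow : t ^ α ≤ T₁ ^ α := Real.rpow_le_rpow ht.1 ht.2 hα0.le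
  calc C * D * ((1 - α) / B + α / (B * Real.Gamma α) * (t ^ α / α))
      = C * ((1 - α) / B + t ^ α / (B * Real.Gamma α)) * D := by field_simp
    _ ≤ C * ((1 - α) / B + T₁ ^ α / (B * Real.Gamma α)) * D := by gcongr

/-- The Picard-type operator
`ψ(φ)(t) = φ_c + ((1−α)/B(α)) g(φ(t)) + (α/(B(α)Γ(α))) ∫_0^t (t−s)^{α−1} g(φ(s)) ds`
maps `C([0,T₁]; E)` into itself and is Lipschitz, in the supremum norm, with
constant `C((1−α)/B(α) + T₁^α/(B(α)Γ(α)))`; in particular it is a contraction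
when this constant is `< 1`. -/
theorem ab_picard_operator_lipschitz
    {E : Type*} [NormedAddCommGroup E] [NormedSpace ℝ E] [CompleteSpace E]
    (α : ℝ) (hα : α ∈ Set.Ioo (0 : ℝ) 1)
    (B : ℝ) (hB : B = 1 - α + α / Real.Gamma α)
    (g : E → E) (C : ℝ) (hC : 0 ≤ C)
    (hg : ∀ x y : E, ‖g x - g y‖ ≤ C * ‖x - y‖)
    (φc : E) (T₁ : ℝ) (hT₁ : 0 < T₁)
    (ψ : (ℝ → E) → (ℝ → E))
    (hψ : ∀ (φ : ℝ → E) (t : ℝ),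
      ψ φ t = φc + ((1 - α) / B) • g (φ t)
        + (α / (B * Real.Gamma α)) • ∫ s in (0 : ℝ)..t, (t - s) ^ (α - 1) • g (φ s)) :
    (∀ φ : ℝ → E, ContinuousOn φ (Set.Icc 0 T₁) → ContinuousOn (ψ φ) (Set.Icc 0 T₁)) ∧
      (∀ φ₁ φ₂ : ℝ → E, ContinuousOn φ₁ (Set.Icc 0 T₁) → ContinuousOn φ₂ (Set.Icc 0 T₁) →
        ∀ t ∈ Set.Icc (0 : ℝ) T₁,
          ‖ψ φ₁ t - ψ φ₂ t‖
            ≤ C * ((1 - α) / B + T₁ ^ α / (B * Real.Gamma α)) *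
                sSup ((fun s => ‖φ₁ s - φ₂ s‖) '' Set.Icc (0 : ℝ) T₁)) :=
  ab_picard_operator_lipschitz_general α hα B hB g C hC hg φc T₁ ψ hψ
end

section
/- Let E be a real Banach space, α ∈ (0,1), B(α) = 1 − α + α/Γ(α), let g : E → E be Lipschitz continuous with constant C ≥ 0 satisfying (1−α)C/B(α) < 1, let φ_c ∈ E, and let T > 0. If φ₁, φ₂ : [0,T] → E are both continuous and satisfy φ_i(t) = φ_c + ((1−α)/B(α)) g(φ_i(t)) + (α/(B(α)Γ(α))) ∫_0^t (t−s)^{α−1} g(φ_i(s)) ds for all t ∈ [0,T] (i = 1,2), then φ₁(t) = φ₂(t) for all t ∈ [0,T]. -/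
open Set MeasureTheory intervalIntegral

/-- Uniqueness of continuous solutions of the Atangana–Baleanu fractional
integral equation on `[0, T]` when `g` is Lipschitz with constant `C` and
`(1−α)C/B(α) < 1`. -/
theorem ab_integral_equation_uniqueness
    {E : Type*} [NormedAddCommGroup E] [NormedSpace ℝ E] [CompleteSpace E]
    (α : ℝ) (hα : α ∈ Set.Ioo (0 : ℝ) 1)
    (B : ℝ) (hB : B = 1 - α + α / Real.Gamma α)
    (g : E → E) (C : ℝ) (hC : 0 ≤ C)
    (hg : ∀ x y : E, ‖g x - g y‖ ≤ C * ‖x - y‖)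
    (hsmall : (1 - α) * C / B < 1)
    (φc : E) (T : ℝ) (hT : 0 < T)
    (φ₁ φ₂ : ℝ → E)
    (hφ₁c : ContinuousOn φ₁ (Set.Icc 0 T)) (hφ₂c : ContinuousOn φ₂ (Set.Icc 0 T))
    (hφ₁ : ∀ t ∈ Set.Icc (0 : ℝ) T,
      φ₁ t = φc + ((1 - α) / B) • g (φ₁ t)
        + (α / (B * Real.Gamma α)) • ∫ s in (0 : ℝ)..t, (t - s) ^ (α - 1) • g (φ₁ s))
    (hφ₂ : ∀ t ∈ Set.Icc (0 : ℝ) T,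
      φ₂ t = φc + ((1 - α) / B) • g (φ₂ t)
        + (α / (B * Real.Gamma α)) • ∫ s in (0 : ℝ)..t, (t - s) ^ (α - 1) • g (φ₂ s)) :
    ∀ t ∈ Set.Icc (0 : ℝ) T, φ₁ t = φ₂ t := by
  obtain ⟨hα0, hα1⟩ := hα
  have hΓ : 0 < Real.Gamma α := Real.Gamma_pos_of_pos hα0
  have h1α : (0:ℝ) < 1 - α := by linarith
  have hBpos : 0 < B := by rw [hB]; positivity
  set f : ℝ → ℝ := fun t => ‖φ₁ t - φ₂ t‖ with hfdef
  have hfc : ContinuousOn f (Icc 0 T) := (hφ₁c.sub hφ₂c).norm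
  have hfnn : ∀ t, 0 ≤ f t := fun t => norm_nonneg _
  set k : ℝ := (1 - α) * C / B with hkdef
  set K : ℝ := α * C / (B * Real.Gamma α) with hKdef
  have hk0 : 0 ≤ k := by positivity
  have hk1 : k < 1 := hsmall
  have hK0 : 0 ≤ K := by positivity
  have h1k : 0 < 1 - k := by linarith
  set K' : ℝ := K / (1 - k) with hK'def
  have hK'0 : 0 ≤ K' := by positivity
  -- Lipschitz ⇒ continuous
  have hgc : Continuous g := by
    have : LipschitzWith (Real.toNNReal C) g := by
      apply LipschitzWith.of_dist_le_mul
      intro x y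
      rw [dist_eq_norm, dist_eq_norm, Real.coe_toNNReal C hC]
      exact hg x y
    exact this.continuous
  -- integrability of the power kernel
  have hpow : ∀ t a : ℝ, IntervalIntegrable (fun s => (t - s) ^ (α - 1)) volume a t := by
    intro t a
    have h := (intervalIntegral.intervalIntegrable_rpow' (a := t - a) (b := t - t)
      (r := α - 1) (by linarith)).comp_sub_left t
    simpa using h
  -- integrability of kernel • g ∘ φ
  have hInt : ∀ t ∈ Icc (0:ℝ) T, ∀ φ : ℝ → E, ContinuousOn φ (Icc 0 T) →
      IntervalIntegrable (fun s => (t - s) ^ (α - 1) • g (φ s)) volume 0 t := by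
    intro t ht φ hφ
    have hIcc : Icc (0:ℝ) t ⊆ Icc 0 T := Icc_subset_Icc le_rfl ht.2
    have h1 : IntegrableOn (fun s => (t - s) ^ (α - 1)) (Icc 0 t) volume := by
      rw [← intervalIntegrable_iff_integrableOn_Icc_of_le ht.1]
      exact hpow t 0
    have h2 := h1.smul_continuousOn (hgc.comp_continuousOn (hφ.mono hIcc)) isCompact_Icc
    rw [intervalIntegrable_iff_integrableOn_Icc_of_le ht.1]
    exact h2
  -- scalar integrabilities
  have hIntf : ∀ t ∈ Icc (0:ℝ) T, IntervalIntegrable (fun s => (t - s) ^ (α - 1) * f s) volume 0 t := by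
    intro t ht
    refine (hpow t 0).mul_continuousOn ?_
    rw [uIcc_of_le ht.1]
    exact hfc.mono (Icc_subset_Icc le_rfl ht.2)
  have hIntCf : ∀ t ∈ Icc (0:ℝ) T,
      IntervalIntegrable (fun s => (t - s) ^ (α - 1) * (C * f s)) volume 0 t := by
    intro t ht
    refine (hpow t 0).mul_continuousOn ?_
    rw [uIcc_of_le ht.1]
    exact (continuousOn_const.mul hfc).mono (Icc_subset_Icc le_rfl ht.2)
  -- the key integral inequality
  have key : ∀ t ∈ Icc (0:ℝ) T, f t ≤ K' * ∫ s in (0:ℝ)..t, (t - s) ^ (α - 1) * f s := by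
    intro t ht
    have I1 := hInt t ht φ₁ hφ₁c
    have I2 := hInt t ht φ₂ hφ₂c
    have I12 : IntervalIntegrable
        (fun s => (t - s) ^ (α - 1) • (g (φ₁ s) - g (φ₂ s))) volume 0 t := by
      simpa only [smul_sub] using I1.sub I2
    have hsub : φ₁ t - φ₂ t
        = ((1 - α) / B) • (g (φ₁ t) - g (φ₂ t))
          + (α / (B * Real.Gamma α)) •
              ∫ s in (0:ℝ)..t, (t - s) ^ (α - 1) • (g (φ₁ s) - g (φ₂ s)) := by
      have hi : (∫ s in (0:ℝ)..t, (t - s) ^ (α - 1) • (g (φ₁ s) - g (φ₂ s)))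
          = (∫ s in (0:ℝ)..t, (t - s) ^ (α - 1) • g (φ₁ s))
            - ∫ s in (0:ℝ)..t, (t - s) ^ (α - 1) • g (φ₂ s) := by
        rw [← intervalIntegral.integral_sub I1 I2]
        exact intervalIntegral.integral_congr fun s _ => smul_sub _ _ _
      rw [hi, smul_sub, smul_sub]
      nth_rewrite 1 [hφ₁ t ht]
      nth_rewrite 1 [hφ₂ t ht]
      abel
    have e2 : ‖∫ s in (0:ℝ)..t, (t - s) ^ (α - 1) • (g (φ₁ s) - g (φ₂ s))‖
        ≤ C * ∫ s in (0:ℝ)..t, (t - s) ^ (α - 1) * f s := by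
      calc ‖∫ s in (0:ℝ)..t, (t - s) ^ (α - 1) • (g (φ₁ s) - g (φ₂ s))‖
          ≤ ∫ s in (0:ℝ)..t, ‖(t - s) ^ (α - 1) • (g (φ₁ s) - g (φ₂ s))‖ :=
            intervalIntegral.norm_integral_le_integral_norm ht.1
        _ ≤ ∫ s in (0:ℝ)..t, (t - s) ^ (α - 1) * (C * f s) := by
            apply intervalIntegral.integral_mono_on ht.1 I12.norm (hIntCf t ht)
            intro s hs
            have hts : 0 ≤ t - s := by linarith [hs.2]
            rw [norm_smul, Real.norm_eq_abs, abs_of_nonneg (Real.rpow_nonneg hts _)]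
            exact mul_le_mul_of_nonneg_left (hg _ _) (Real.rpow_nonneg hts _)
        _ = C * ∫ s in (0:ℝ)..t, (t - s) ^ (α - 1) * f s := by
            rw [← intervalIntegral.integral_const_mul]
            exact intervalIntegral.integral_congr fun s _ => by ring
    have hft : f t ≤ k * f t + K * ∫ s in (0:ℝ)..t, (t - s) ^ (α - 1) * f s := by
      have h1 : f t ≤ ‖((1 - α) / B) • (g (φ₁ t) - g (φ₂ t))‖
          + ‖(α / (B * Real.Gamma α)) •
              ∫ s in (0:ℝ)..t, (t - s) ^ (α - 1) • (g (φ₁ s) - g (φ₂ s))‖ := by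
        have hfe : f t = ‖((1 - α) / B) • (g (φ₁ t) - g (φ₂ t))
            + (α / (B * Real.Gamma α)) •
                ∫ s in (0:ℝ)..t, (t - s) ^ (α - 1) • (g (φ₁ s) - g (φ₂ s))‖ := by
          rw [show f t = ‖φ₁ t - φ₂ t‖ from rfl, hsub]
        rw [hfe]
        exact norm_add_le _ _
      have h2 : ‖((1 - α) / B) • (g (φ₁ t) - g (φ₂ t))‖ ≤ k * f t := by
        rw [norm_smul, Real.norm_eq_abs, abs_of_nonneg (by positivity)]
        calc (1 - α) / B * ‖g (φ₁ t) - g (φ₂ t)‖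
            ≤ (1 - α) / B * (C * f t) :=
              mul_le_mul_of_nonneg_left (hg _ _) (by positivity)
          _ = k * f t := by rw [hkdef]; ring
      have h3 : ‖(α / (B * Real.Gamma α)) •
            ∫ s in (0:ℝ)..t, (t - s) ^ (α - 1) • (g (φ₁ s) - g (φ₂ s))‖
          ≤ K * ∫ s in (0:ℝ)..t, (t - s) ^ (α - 1) * f s := by
        rw [norm_smul, Real.norm_eq_abs, abs_of_nonneg (by positivity)]
        calc α / (B * Real.Gamma α)
              * ‖∫ s in (0:ℝ)..t, (t - s) ^ (α - 1) • (g (φ₁ s) - g (φ₂ s))‖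
            ≤ α / (B * Real.Gamma α) * (C * ∫ s in (0:ℝ)..t, (t - s) ^ (α - 1) * f s) :=
              mul_le_mul_of_nonneg_left e2 (by positivity)
          _ = K * ∫ s in (0:ℝ)..t, (t - s) ^ (α - 1) * f s := by rw [hKdef]; ring
      linarith
    rw [hK'def, div_mul_eq_mul_div, le_div_iff₀ h1k]
    nlinarith [hft]
  -- choose the step size δ
  set δ : ℝ := (α / (2 * (K' + 1))) ^ (α⁻¹) with hδdef
  have hδpos : 0 < δ := Real.rpow_pos_of_pos (by positivity) _
  have hδα : δ ^ α = α / (2 * (K' + 1)) :=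
    Real.rpow_inv_rpow (by positivity) (ne_of_gt hα0)
  have hδsmall : K' * δ ^ α ≤ α / 2 := by
    rw [hδα, ← mul_div_assoc, div_le_div_iff₀ (by positivity) two_pos]
    nlinarith
  -- f vanishes at 0
  have hf00 : f 0 = 0 := by
    have h := key 0 ⟨le_rfl, hT.le⟩
    rw [intervalIntegral.integral_same, mul_zero] at h
    exact le_antisymm h (hfnn 0)
  -- induction: f vanishes on [0, min (n δ) T]
  have claim : ∀ n : ℕ, ∀ t ∈ Icc (0:ℝ) (min ((n:ℝ) * δ) T), f t = 0 := by
    intro n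
    induction n with
    | zero =>
      intro t ht
      rw [show ((0:ℕ):ℝ) = 0 by norm_num, zero_mul, min_eq_left hT.le] at ht
      have : t = 0 := le_antisymm ht.2 ht.1
      rw [this]; exact hf00
    | succ n ih =>
      intro t ht
      set a : ℝ := min ((n:ℝ) * δ) T with hadef
      set b : ℝ := min (((n + 1 : ℕ):ℝ) * δ) T with hbdef
      have ha0 : 0 ≤ a := le_min (by positivity) hT.le
      have hab : a ≤ b := by
        apply min_le_min _ le_rfl
        push_cast
        nlinarith
      have hbT : b ≤ T := min_le_right _ _
      have hb0 : 0 ≤ b := ha0.trans hab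
      have hba : b - a ≤ δ := by
        rcases le_total ((n:ℝ) * δ) T with h | h
        · have haeq : a = (n:ℝ) * δ := min_eq_left h
          have hble : b ≤ ((n + 1 : ℕ):ℝ) * δ := min_le_left _ _
          push_cast at hble
          rw [haeq]
          nlinarith
        · have haeq : a = T := min_eq_right h
          rw [haeq]
          linarith [min_le_right (((n + 1 : ℕ):ℝ) * δ) T]
      -- maximum of f on [0, b]
      obtain ⟨c, hc, hcmax⟩ := isCompact_Icc.exists_isMaxOn (nonempty_Icc.mpr hb0)
        (hfc.mono (Icc_subset_Icc le_rfl hbT))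
      have hfc0 : f c = 0 := by
        rcases le_or_gt c a with hca | hca
        · exact ih c ⟨hc.1, hca⟩
        · -- main estimate
          have hcT : c ∈ Icc (0:ℝ) T := ⟨hc.1, hc.2.trans hbT⟩
          have hkeyc := key c hcT
          have Ifull := hIntf c hcT
          have Ia : IntervalIntegrable (fun s => (c - s) ^ (α - 1) * f s) volume 0 a := by
            apply Ifull.mono_set
            rw [uIcc_of_le ha0, uIcc_of_le hcT.1]
            exact Icc_subset_Icc le_rfl hca.le
          have Iac : IntervalIntegrable (fun s => (c - s) ^ (α - 1) * f s) volume a c := by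
            apply Ifull.mono_set
            rw [uIcc_of_le hca.le, uIcc_of_le hcT.1]
            exact Icc_subset_Icc ha0 le_rfl
          have hsplit : (∫ s in (0:ℝ)..c, (c - s) ^ (α - 1) * f s)
              = (∫ s in (0:ℝ)..a, (c - s) ^ (α - 1) * f s)
                + ∫ s in a..c, (c - s) ^ (α - 1) * f s :=
            (intervalIntegral.integral_add_adjacent_intervals Ia Iac).symm
          have hz : (∫ s in (0:ℝ)..a, (c - s) ^ (α - 1) * f s) = 0 := by
            have he : (∫ s in (0:ℝ)..a, (c - s) ^ (α - 1) * f s)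
                = ∫ s in (0:ℝ)..a, (0:ℝ) := by
              apply intervalIntegral.integral_congr
              intro s hs
              rw [uIcc_of_le ha0] at hs
              simp [ih s hs]
            rw [he, intervalIntegral.integral_zero]
          have hb2 : (∫ s in a..c, (c - s) ^ (α - 1) * f s)
              ≤ ∫ s in a..c, (c - s) ^ (α - 1) * f c := by
            apply intervalIntegral.integral_mono_on hca.le Iac ((hpow c a).mul_const (f c))
            intro s hs
            have hpow0 : (0:ℝ) ≤ (c - s) ^ (α - 1) := Real.rpow_nonneg (by linarith [hs.2]) _
            exact mul_le_mul_of_nonneg_left (hcmax ⟨ha0.trans hs.1, hs.2.trans hc.2⟩) hpow0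
          have hcomp : (∫ s in a..c, (c - s) ^ (α - 1)) = (c - a) ^ α / α := by
            rw [intervalIntegral.integral_comp_sub_left (fun u => u ^ (α - 1)) c, sub_self,
              integral_rpow (Or.inl (by linarith)),
              show α - 1 + 1 = α from by ring, Real.zero_rpow (ne_of_gt hα0), sub_zero]
          have hb3 : (∫ s in a..c, (c - s) ^ (α - 1) * f c) = (c - a) ^ α / α * f c := by
            rw [intervalIntegral.integral_mul_const, hcomp]
          have hpa : (c - a) ^ α ≤ δ ^ α :=
            Real.rpow_le_rpow (by linarith) (by linarith [hc.2]) hα0.le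
          have hq : K' * (δ ^ α / α) ≤ 1 / 2 := by
            rw [← mul_div_assoc, div_le_iff₀ hα0]
            linarith [hδsmall]
          have hchain2 : f c ≤ (K' * (δ ^ α / α)) * f c := by
            calc f c ≤ K' * ∫ s in (0:ℝ)..c, (c - s) ^ (α - 1) * f s := hkeyc
              _ = K' * ∫ s in a..c, (c - s) ^ (α - 1) * f s := by rw [hsplit, hz, zero_add]
              _ ≤ K' * ((c - a) ^ α / α * f c) := by
                  apply mul_le_mul_of_nonneg_left _ hK'0
                  rw [← hb3]; exact hb2
              _ ≤ K' * (δ ^ α / α * f c) := by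
                  apply mul_le_mul_of_nonneg_left _ hK'0
                  apply mul_le_mul_of_nonneg_right _ (hfnn c)
                  gcongr
              _ = (K' * (δ ^ α / α)) * f c := by ring
          have hle : f c ≤ 0 := by
            have h := mul_le_mul_of_nonneg_right hq (hfnn c)
            linarith [hchain2]
          exact le_antisymm hle (hfnn c)
      have hle := hcmax ht
      rw [hfc0] at hle
      exact le_antisymm hle (hfnn t)
  -- conclude
  intro t ht
  obtain ⟨n, hn⟩ := exists_nat_ge (T / δ)
  have hmin : min ((n:ℝ) * δ) T = T := by
    apply min_eq_right
    rw [div_le_iff₀ hδpos] at hn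
    linarith
  have hf0 := claim n t (by rw [hmin]; exact ht)
  have hnn : ‖φ₁ t - φ₂ t‖ = 0 := hf0
  exact sub_eq_zero.mp (norm_eq_zero.mp hnn)
end
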